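/- arXiv:2012.10344 — 6 statements merged into one kernel-verified Lean document; each statement's English description precedes it below -/
import Mathlib

section
/- Let W ∈ C²(ℝ^{d×d}; ℝ) with S = DW, p ≥ 2, and suppose there exist constants C > 0, R > 0 such that (S(F₁) - S(F₂)) : (F₁ - F₂) ≥ C(|F₁|^{p-2} + |F₂|^{p-2})|F₁ - F₂|² whenever |F₁|, |F₂| ≥ R. Then there exist constants C' > 0 and K > 0 such that for ALL F₁, F₂ ∈ ℝ^{d×d}, (S(F₁) - S(F₂)) : (F₁ - F₂) ≥ (C'(|F₁|^{p-2} + |F₂|^{p-2}) - K)|F₁ - F₂|². -/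
/-!
On the ball of radius `2R` the gradient `S = ∇W` is Lipschitz, which controls
`(S F₁ - S F₂) : (F₁ - F₂)` from below by `-L |F₁ - F₂|²`; there the powers `|Fᵢ|^(p-2)` are
bounded, so they can be absorbed into `K`. When both points lie outside the ball of radius `R`
the hypothesis applies directly. In the remaining case `|F₁| ≤ R`, `|F₂| ≥ 2R`, the segment from
`F₂` to `F₁` meets the sphere of radius `R` in a point `G` at least a third of the way along;
the hypothesis applied to `(G, F₂)` and the Lipschitz bound applied to `(F₁, G)` combine to the
estimate with `C / 3`.
-/

open Metric NNReal

section AndrewsBall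

variable {E : Type*} [NormedAddCommGroup E] [InnerProductSpace ℝ E]

lemma neg_mul_norm_sq_le_inner {u v : E} {L : ℝ} (h : ‖u‖ ≤ L * ‖v‖) :
    -(L * ‖v‖ ^ 2) ≤ inner ℝ u v :=
  calc -(L * ‖v‖ ^ 2) = -((L * ‖v‖) * ‖v‖) := by ring
    _ ≤ -(‖u‖ * ‖v‖) := neg_le_neg (mul_le_mul_of_nonneg_right h (norm_nonneg v))
    _ ≤ inner ℝ u v := neg_le_of_abs_le (abs_real_inner_le_norm u v)

lemma LipschitzOnWith.neg_mul_norm_sq_le_inner_sub {S : E → E} {L : ℝ≥0} {s : Set E}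
    (hS : LipschitzOnWith L S s) {x y : E} (hx : x ∈ s) (hy : y ∈ s) :
    -(L * ‖x - y‖ ^ 2) ≤ inner ℝ (S x - S y) (x - y) :=
  neg_mul_norm_sq_le_inner (lipschitzOnWith_iff_norm_sub_le.mp hS hx hy)

lemma exists_norm_eq_on_segment_of_two_mul_le {x y : E} {R : ℝ} (hx : ‖x‖ ≤ R)
    (hy : 2 * R ≤ ‖y‖) : ∃ t ∈ Set.Icc (1 / 3 : ℝ) 1, ‖y + t • (x - y)‖ = R := by
  have hcont : Continuous fun t : ℝ => ‖y + t • (x - y)‖ := by fun_prop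
  have hthird : R ≤ ‖y + (1 / 3 : ℝ) • (x - y)‖ :=
    calc R ≤ ‖y‖ - (1 / 3) * (‖x‖ + ‖y‖) := by linarith
      _ ≤ ‖y‖ - (1 / 3) * ‖x - y‖ := by gcongr; exact norm_sub_le x y
      _ = ‖y‖ - ‖(1 / 3 : ℝ) • (x - y)‖ := by rw [norm_smul]; norm_num
      _ ≤ ‖y + (1 / 3 : ℝ) • (x - y)‖ := norm_sub_le_norm_add _ _
  have hone : ‖y + (1 : ℝ) • (x - y)‖ ≤ R := by simpa using hx
  exact intermediate_value_Icc' (by norm_num) hcont.continuousOn ⟨hone, hthird⟩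

variable {S : E → E} {p C R : ℝ} {L : ℝ≥0}

lemma inner_sub_ge_of_mem_closedBall (hp : 2 ≤ p) (hC : 0 ≤ C) {ρ : ℝ}
    (hS : LipschitzOnWith L S (closedBall 0 ρ)) {x y : E} (hx : ‖x‖ ≤ ρ) (hy : ‖y‖ ≤ ρ) :
    (C * (‖x‖ ^ (p - 2) + ‖y‖ ^ (p - 2)) - (L + 2 * C * ρ ^ (p - 2))) * ‖x - y‖ ^ 2 ≤
      inner ℝ (S x - S y) (x - y) := by
  have hxp : ‖x‖ ^ (p - 2) ≤ ρ ^ (p - 2) := Real.rpow_le_rpow (norm_nonneg x) hx (by linarith)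
  have hyp : ‖y‖ ^ (p - 2) ≤ ρ ^ (p - 2) := Real.rpow_le_rpow (norm_nonneg y) hy (by linarith)
  have hcoeff : C * (‖x‖ ^ (p - 2) + ‖y‖ ^ (p - 2)) - (L + 2 * C * ρ ^ (p - 2)) ≤ -L := by
    nlinarith
  calc _ ≤ -(L : ℝ) * ‖x - y‖ ^ 2 := mul_le_mul_of_nonneg_right hcoeff (sq_nonneg _)
    _ ≤ inner ℝ (S x - S y) (x - y) := by
      rw [neg_mul]
      exact hS.neg_mul_norm_sq_le_inner_sub (by simpa using hx) (by simpa using hy)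

variable (h : ∀ x y : E, R ≤ ‖x‖ → R ≤ ‖y‖ →
  C * (‖x‖ ^ (p - 2) + ‖y‖ ^ (p - 2)) * ‖x - y‖ ^ 2 ≤ inner ℝ (S x - S y) (x - y))
include h

lemma inner_sub_ge_of_norm_add_smul_eq {x y : E} (hy : R ≤ ‖y‖) {t : ℝ}
    (ht : 0 < t) (hG : ‖y + t • (x - y)‖ = R) :
    t * (C * (R ^ (p - 2) + ‖y‖ ^ (p - 2))) * ‖x - y‖ ^ 2 ≤
      inner ℝ (S (y + t • (x - y)) - S y) (x - y) := by
  have hmono := h (y + t • (x - y)) y hG.ge hy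
  rw [hG, add_sub_cancel_left, real_inner_smul_right, norm_smul, Real.norm_eq_abs,
    abs_of_pos ht] at hmono
  have : t * (t * (C * (R ^ (p - 2) + ‖y‖ ^ (p - 2))) * ‖x - y‖ ^ 2) ≤
      t * inner ℝ (S (y + t • (x - y)) - S y) (x - y) := by linarith
  exact le_of_mul_le_mul_left this ht

lemma inner_sub_ge_of_norm_le_of_two_mul_le (hp : 2 ≤ p) (hC : 0 ≤ C)
    (hS : LipschitzOnWith L S (closedBall 0 (2 * R))) {x y : E} (hx : ‖x‖ ≤ R)
    (hy : 2 * R ≤ ‖y‖) :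
    (C / 3 * (‖x‖ ^ (p - 2) + ‖y‖ ^ (p - 2)) - L) * ‖x - y‖ ^ 2 ≤
      inner ℝ (S x - S y) (x - y) := by
  obtain ⟨t, ⟨ht₁, ht₂⟩, hG⟩ := exists_norm_eq_on_segment_of_two_mul_le hx hy
  set G := y + t • (x - y)
  have hR : 0 ≤ R := by linarith [norm_nonneg x]
  have hfar := inner_sub_ge_of_norm_add_smul_eq h (by linarith) (by linarith) hG
  have hxG : ‖x - G‖ ≤ ‖x - y‖ := by
    have : x - G = (1 - t) • (x - y) := by simp only [G, sub_smul, one_smul]; abel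
    rw [this, norm_smul, Real.norm_eq_abs, abs_of_nonneg (by linarith)]
    exact mul_le_of_le_one_left (norm_nonneg _) (by linarith)
  have hnear : -(L * ‖x - y‖ ^ 2) ≤ inner ℝ (S x - S G) (x - y) := by
    refine neg_mul_norm_sq_le_inner ((lipschitzOnWith_iff_norm_sub_le.mp hS (x := x) (y := G) ?_ ?_).trans ?_)
    · simpa using hx.trans (by linarith)
    · simpa [hG] using (by linarith : R ≤ 2 * R)
    · exact mul_le_mul_of_nonneg_left hxG L.2
  have hxp : ‖x‖ ^ (p - 2) ≤ R ^ (p - 2) := Real.rpow_le_rpow (norm_nonneg x) hx (by linarith)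
  have hsplit : inner ℝ (S x - S y) (x - y) =
      inner ℝ (S x - S G) (x - y) + inner ℝ (S G - S y) (x - y) := by
    rw [← inner_add_left, sub_add_sub_cancel]
  have hpos : 0 ≤ C * (R ^ (p - 2) + ‖y‖ ^ (p - 2)) * ‖x - y‖ ^ 2 := by positivity
  nlinarith [mul_le_mul_of_nonneg_left hxp (mul_nonneg hC (sq_nonneg ‖x - y‖))]

theorem inner_sub_ge_of_lipschitzOnWith_closedBall (hp : 2 ≤ p) (hC : 0 ≤ C) (hR : 0 ≤ R)
    (hS : LipschitzOnWith L S (closedBall 0 (2 * R))) (x y : E) :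
    (C / 3 * (‖x‖ ^ (p - 2) + ‖y‖ ^ (p - 2)) - (L + 2 * (C / 3) * (2 * R) ^ (p - 2))) *
      ‖x - y‖ ^ 2 ≤ inner ℝ (S x - S y) (x - y) := by
  wlog hxy : ‖x‖ ≤ ‖y‖ generalizing x y
  · have hswap := this y x (le_of_not_ge hxy)
    rwa [add_comm (‖y‖ ^ (p - 2)), norm_sub_rev, ← neg_sub x y, ← neg_sub (S x) (S y),
      inner_neg_neg] at hswap
  have hK : 0 ≤ (L : ℝ) + 2 * (C / 3) * (2 * R) ^ (p - 2) := by positivity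
  rcases le_or_gt ‖y‖ (2 * R) with hy | hy
  · exact inner_sub_ge_of_mem_closedBall hp (by positivity) hS (hxy.trans hy) hy
  rcases le_or_gt R ‖x‖ with hx | hx
  · refine le_trans (mul_le_mul_of_nonneg_right ?_ (sq_nonneg _)) (h x y hx (by linarith))
    have : 0 ≤ ‖x‖ ^ (p - 2) + ‖y‖ ^ (p - 2) := by positivity
    nlinarith
  · refine le_trans ?_ (inner_sub_ge_of_norm_le_of_two_mul_le h hp hC hS hx.le hy.le)
    gcongr
    linarith [(by positivity : 0 ≤ 2 * (C / 3) * (2 * R) ^ (p - 2))]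

end AndrewsBall

lemma ContDiff.exists_lipschitzOnWith_gradient {F : Type*} [NormedAddCommGroup F]
    [InnerProductSpace ℝ F] [CompleteSpace F] {W : F → ℝ} (hW : ContDiff ℝ 2 W) {s : Set F}
    (hs : IsCompact s) : ∃ L, LipschitzOnWith L (gradient W) s := by
  have hS : ContDiff ℝ 1 (gradient W) :=
    (InnerProductSpace.toDual ℝ F).symm.contDiff.comp (hW.fderiv_right (by norm_num))
  exact hS.locallyLipschitz.locallyLipschitzOn.exists_lipschitzOnWith_of_compact hs

/-- (AB′) outside a ball implies the global strengthened Andrews–Ball condition (A4′). -/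
theorem stmt1 (d : ℕ) (p : ℝ) (hp : 2 ≤ p)
    (W : EuclideanSpace ℝ (Fin d × Fin d) → ℝ) (hW : ContDiff ℝ 2 W)
    (C R : ℝ) (hC : 0 < C) (hR : 0 < R)
    (h : ∀ F₁ F₂ : EuclideanSpace ℝ (Fin d × Fin d), R ≤ ‖F₁‖ → R ≤ ‖F₂‖ →
      (inner ℝ (gradient W F₁ - gradient W F₂) (F₁ - F₂) : ℝ) ≥
        C * (‖F₁‖ ^ (p - 2) + ‖F₂‖ ^ (p - 2)) * ‖F₁ - F₂‖ ^ 2) :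
    ∃ C' K : ℝ, 0 < C' ∧ 0 < K ∧
      ∀ F₁ F₂ : EuclideanSpace ℝ (Fin d × Fin d),
        (inner ℝ (gradient W F₁ - gradient W F₂) (F₁ - F₂) : ℝ) ≥
          (C' * (‖F₁‖ ^ (p - 2) + ‖F₂‖ ^ (p - 2)) - K) * ‖F₁ - F₂‖ ^ 2 := by
  obtain ⟨L, hL⟩ := hW.exists_lipschitzOnWith_gradient (isCompact_closedBall 0 (2 * R))
  exact ⟨C / 3, L + 2 * (C / 3) * (2 * R) ^ (p - 2), by positivity, by positivity,
    inner_sub_ge_of_lipschitzOnWith_closedBall h hp hC.le hR.le hL⟩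
end

section
/- Let W ∈ C²(ℝ^{d×d}; ℝ) with S = DW, p ≥ 2, and suppose there exist constants c > 0 and K > 0 such that (S(F₁) - S(F₂)) : (F₁ - F₂) ≥ (c(|F₁|^{p-2} + |F₂|^{p-2}) - K)|F₁ - F₂|² for all F₁, F₂. Then the Hessian of W̃(F) := W(F) + (K/2)|F|² satisfies D²W̃(F)[H, H] ≥ 2c|F|^{p-2}|H|² for all matrices F and H. -/
/-!
Adding `(K/2)‖F‖²` adds `K F` to the gradient, so for `W̃` the hypothesis reads
`⟪∇W̃ F₁ - ∇W̃ F₂, F₁ - F₂⟫ ≥ c (‖F₁‖^(p-2) + ‖F₂‖^(p-2)) ‖F₁ - F₂‖²`.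
With `F₁ = F + tH`, `F₂ = F` and `t → 0⁺`, the left side divided by `t²` tends to
`D²W̃(F)[H, H]` and the right side to `2c ‖F‖^(p-2) ‖H‖²`.
-/

open Filter Topology

section SecondDerivative

variable {E : Type*} [NormedAddCommGroup E] [NormedSpace ℝ E]

theorem hasDerivAt_fderiv_apply_add_smul {F : Type*} [NormedAddCommGroup F] [NormedSpace ℝ F]
    {f : E → F} {x : E}
    (hf : DifferentiableAt ℝ (fderiv ℝ f) x) (v : E) :
    HasDerivAt (fun t : ℝ => fderiv ℝ f (x + t • v) v) (fderiv ℝ (fderiv ℝ f) x v v) 0 := by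
  have hline : HasDerivAt (fun t : ℝ => x + t • v) v 0 := by
    simpa using ((hasDerivAt_id (0 : ℝ)).smul_const v).const_add x
  have hf' : HasFDerivAt (fderiv ℝ f) (fderiv ℝ (fderiv ℝ f) x) (x + (0 : ℝ) • v) := by
    simpa using hf.hasFDerivAt
  exact (ContinuousLinearMap.apply ℝ F v).hasFDerivAt.comp_hasDerivAt 0
    (hf'.comp_hasDerivAt 0 hline)

theorem le_fderiv_fderiv_apply_of_le_fderiv_sub {f : E → ℝ} {x : E}
    (hf : DifferentiableAt ℝ (fderiv ℝ f) x) {m : E → ℝ} (hm : ContinuousAt m x)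
    (hmono : ∀ᶠ y in 𝓝 x, m y * ‖y - x‖ ^ 2 ≤ fderiv ℝ f y (y - x) - fderiv ℝ f x (y - x))
    (v : E) : m x * ‖v‖ ^ 2 ≤ fderiv ℝ (fderiv ℝ f) x v v := by
  set ψ : ℝ → ℝ := fun t => fderiv ℝ f (x + t • v) v
  have hray : Tendsto (fun t : ℝ => x + t • v) (𝓝[>] 0) (𝓝 x) := by
    have : Continuous (fun t : ℝ => x + t • v) := by fun_prop
    simpa using (this.tendsto 0).mono_left nhdsWithin_le_nhds
  have hslope : Tendsto (slope ψ 0) (𝓝[>] 0) (𝓝 (fderiv ℝ (fderiv ℝ f) x v v)) :=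
    (hasDerivAt_iff_tendsto_slope.mp (hasDerivAt_fderiv_apply_add_smul hf v)).mono_left
      (nhdsWithin_mono _ fun t ht => ne_of_gt ht)
  have hlower : Tendsto (fun t : ℝ => m (x + t • v) * ‖v‖ ^ 2) (𝓝[>] 0) (𝓝 (m x * ‖v‖ ^ 2)) :=
    ((hm.tendsto.comp hray).mul_const _)
  refine le_of_tendsto_of_tendsto hlower hslope ?_
  filter_upwards [hray.eventually hmono, self_mem_nhdsWithin] with t ht (htpos : 0 < t)
  simp only [add_sub_cancel_left, map_smul, smul_eq_mul, norm_smul, Real.norm_eq_abs,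
    abs_of_pos htpos] at ht
  rw [slope_def_field, sub_zero, le_div_iff₀ htpos]
  simp only [ψ, zero_smul, add_zero]
  nlinarith

end SecondDerivative

section InnerProduct

variable {E : Type*} [NormedAddCommGroup E] [InnerProductSpace ℝ E]

theorem fderiv_add_half_mul_norm_sq {W : E → ℝ} {x : E} (hW : DifferentiableAt ℝ W x) (K : ℝ) :
    fderiv ℝ (fun G => W G + K / 2 * ‖G‖ ^ 2) x = fderiv ℝ W x + K • innerSL ℝ x := by
  have hq : HasFDerivAt (fun G : E => K / 2 * ‖G‖ ^ 2) (K • innerSL ℝ x) x := by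
    refine ((hasStrictFDerivAt_norm_sq x).hasFDerivAt.const_mul (K / 2)).congr_fderiv ?_
    ext v
    simp only [smul_apply, innerSL_apply_apply, smul_eq_mul, nsmul_eq_mul]
    ring
  exact (hW.hasFDerivAt.add hq).fderiv

theorem fderiv_add_half_mul_norm_sq_sub_apply [CompleteSpace E] {W : E → ℝ}
    (hW : Differentiable ℝ W) (K : ℝ) (x y : E) :
    fderiv ℝ (fun G => W G + K / 2 * ‖G‖ ^ 2) y (y - x) -
        fderiv ℝ (fun G => W G + K / 2 * ‖G‖ ^ 2) x (y - x) =
      inner ℝ (gradient W y - gradient W x) (y - x) + K * ‖y - x‖ ^ 2 := by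
  simp only [fderiv_add_half_mul_norm_sq (hW _), add_apply, smul_apply, innerSL_apply_apply,
    smul_eq_mul, inner_sub_left, gradient, InnerProductSpace.toDual_symm_apply]
  rw [← real_inner_self_eq_norm_sq, inner_sub_left]
  ring

end InnerProduct

theorem stmt2_general (d : ℕ) (p : ℝ) (hp : 2 ≤ p)
    (W : EuclideanSpace ℝ (Fin d × Fin d) → ℝ) (hW : ContDiff ℝ 2 W)
    (c K : ℝ)
    (h : ∀ F₁ F₂ : EuclideanSpace ℝ (Fin d × Fin d),
      (inner ℝ (gradient W F₁ - gradient W F₂) (F₁ - F₂) : ℝ) ≥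
        (c * (‖F₁‖ ^ (p - 2) + ‖F₂‖ ^ (p - 2)) - K) * ‖F₁ - F₂‖ ^ 2) :
    ∀ F H : EuclideanSpace ℝ (Fin d × Fin d),
      iteratedFDeriv ℝ 2 (fun G => W G + K / 2 * ‖G‖ ^ 2) F ![H, H] ≥
        2 * c * ‖F‖ ^ (p - 2) * ‖H‖ ^ 2 := by
  intro F H
  have hWK : ContDiff ℝ 2 (fun G => W G + K / 2 * ‖G‖ ^ 2) :=
    hW.add (contDiff_const.mul (contDiff_norm_sq ℝ))
  have hmono : ∀ G, c * (‖G‖ ^ (p - 2) + ‖F‖ ^ (p - 2)) * ‖G - F‖ ^ 2 ≤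
      fderiv ℝ (fun G => W G + K / 2 * ‖G‖ ^ 2) G (G - F) -
        fderiv ℝ (fun G => W G + K / 2 * ‖G‖ ^ 2) F (G - F) := fun G => by
    rw [fderiv_add_half_mul_norm_sq_sub_apply (hW.differentiable (by norm_num))]
    linarith [h G F]
  have hcont : ContinuousAt (fun G : EuclideanSpace ℝ (Fin d × Fin d) =>
      c * (‖G‖ ^ (p - 2) + ‖F‖ ^ (p - 2))) F := by
    have hrpow := Real.continuousAt_rpow_const ‖F‖ (p - 2) (Or.inr (by linarith))
    fun_prop
  have hhess := le_fderiv_fderiv_apply_of_le_fderiv_sub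
    ((hWK.fderiv_right (m := 1) le_rfl).differentiable one_ne_zero).differentiableAt hcont
    (Eventually.of_forall hmono) H
  rw [ge_iff_le, iteratedFDeriv_two_apply]
  simp only [Matrix.cons_val_zero, Matrix.cons_val_one]
  linarith [hhess]

/-- Under the global strengthened Andrews–Ball condition (A4′), the Hessian of
`W̃(F) = W(F) + (K/2)‖F‖²` satisfies `D²W̃(F)[H,H] ≥ 2c‖F‖^(p-2)‖H‖²`. -/
theorem stmt2 (d : ℕ) (p : ℝ) (hp : 2 ≤ p)
    (W : EuclideanSpace ℝ (Fin d × Fin d) → ℝ) (hW : ContDiff ℝ 2 W)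
    (c K : ℝ) (hc : 0 < c) (hK : 0 < K)
    (h : ∀ F₁ F₂ : EuclideanSpace ℝ (Fin d × Fin d),
      (inner ℝ (gradient W F₁ - gradient W F₂) (F₁ - F₂) : ℝ) ≥
        (c * (‖F₁‖ ^ (p - 2) + ‖F₂‖ ^ (p - 2)) - K) * ‖F₁ - F₂‖ ^ 2) :
    ∀ F H : EuclideanSpace ℝ (Fin d × Fin d),
      iteratedFDeriv ℝ 2 (fun G => W G + K / 2 * ‖G‖ ^ 2) F ![H, H] ≥
        2 * c * ‖F‖ ^ (p - 2) * ‖H‖ ^ 2 :=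
  stmt2_general d p hp W hW c K h
end

section
/- Let q > 1, C > 0, F ∈ L¹(0,T) nonnegative, and let y ∈ C([0,T]) be nonnegative with y(0) = 0 and satisfy y(t) ≤ C q ∫₀ᵗ F(s) y(s)^{1 - 1/q} ds for all t ∈ [0,T]. Then y(t) ≤ (C ∫₀ᵗ F(s) ds)^q for all t ∈ [0,T]. -/
/-!
Put `z t = C q ∫₀ᵗ F y^(1 - 1/q)`. It is absolutely continuous with `z' = C q F y^(1 - 1/q)`
almost everywhere, and `y ≤ z` turns this into the differential inequality
`z' ≤ q (C F) z^(1 - 1/q)`, i.e. `(z^(1/q))' ≤ C F`. Integrating this (the fundamental theorem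
of calculus for absolutely continuous functions) gives `y ≤ z ≤ (C ∫₀ᵗ F)^q`.
-/

open MeasureTheory Set Filter Topology
open scoped NNReal

theorem LipschitzOnWith.comp_absolutelyContinuousOnInterval {X Y : Type*} [PseudoMetricSpace X]
    [PseudoMetricSpace Y] {g : X → Y} {f : ℝ → X} {K : ℝ≥0} {s : Set X} {a b : ℝ}
    (hg : LipschitzOnWith K g s) (hf : AbsolutelyContinuousOnInterval f a b)
    (hfs : MapsTo f (uIcc a b) s) : AbsolutelyContinuousOnInterval (g ∘ f) a b := by
  have hK := Filter.Tendsto.const_mul (K : ℝ) hf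
  rw [mul_zero] at hK
  refine squeeze_zero' (Eventually.of_forall fun _ ↦ Finset.sum_nonneg fun _ _ ↦ dist_nonneg)
    ?_ hK
  filter_upwards [mem_inf_of_right (mem_principal_self _)] with E hE
  rw [Finset.mul_sum]
  exact Finset.sum_le_sum fun i hi ↦ hg.dist_le_mul _ (hfs (hE.1 i hi).1) _ (hfs (hE.1 i hi).2)

section Bihari

variable {z g : ℝ → ℝ} {q a b : ℝ}

theorem AbsolutelyContinuousOnInterval.add_rpow_one_div_le_add_integral_of_deriv_le
    (hab : a ≤ b) (hq : 1 ≤ q) (hz : AbsolutelyContinuousOnInterval z a b)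
    (hz0 : ∀ x ∈ Icc a b, 0 ≤ z x) (hg : IntervalIntegrable g volume a b)
    (hg0 : ∀ x ∈ Ioo a b, 0 ≤ g x)
    (hderiv : ∀ᵐ x, x ∈ Ioo a b → deriv z x ≤ q * g x * z x ^ (1 - 1 / q))
    {δ : ℝ} (hδ : 0 < δ) :
    (z b + δ) ^ (1 / q) ≤ (z a + δ) ^ (1 / q) + ∫ x in a..b, g x := by
  have hq0 : 0 < q := by linarith
  have hθ : 0 ≤ 1 - 1 / q := sub_nonneg.2 ((div_le_one hq0).2 hq)
  set h : ℝ → ℝ := fun u ↦ (u + δ) ^ (1 / q)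
  obtain ⟨M, hM⟩ := hz.exists_bound
  have hzM : MapsTo z (uIcc a b) (Icc 0 M) := fun x hx ↦
    ⟨hz0 x (uIcc_of_le hab ▸ hx), (le_abs_self _).trans (hM x hx)⟩
  have hh : ContDiffOn ℝ 1 h (Icc 0 M) := fun u hu ↦
    ((contDiffAt_id.add contDiffAt_const).rpow_const_of_ne
      (by linarith [hu.1] : 0 < u + δ).ne').contDiffWithinAt
  obtain ⟨K, hK⟩ := hh.exists_lipschitzOnWith one_ne_zero (convex_Icc 0 M) isCompact_Icc
  have hw := hK.comp_absolutelyContinuousOnInterval hz hzM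
  have hderiv_w : deriv (h ∘ z) ≤ᵐ[volume.restrict (Icc a b)] g := by
    refine (ae_restrict_congr_set Ioo_ae_eq_Icc).1 ((ae_restrict_iff' measurableSet_Ioo).2 ?_)
    filter_upwards [hderiv, hz.ae_differentiableAt] with x hx hzx hxab
    have hxI : x ∈ Icc a b := Ioo_subset_Icc_self hxab
    have hpos : 0 < z x + δ := by linarith [hz0 x hxI]
    have hchain : deriv (h ∘ z) x = deriv z x * (1 / q) * (z x + δ) ^ (1 / q - 1) :=
      (((hzx (uIcc_of_le hab ▸ hxI)).hasDerivAt.add_const δ).rpow_const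
        (p := 1 / q) (Or.inl hpos.ne')).deriv
    have hcancel : (z x + δ) ^ (1 / q - 1) * (z x + δ) ^ (1 - 1 / q) = 1 := by
      rw [← Real.rpow_add hpos]; norm_num
    have hgx := hg0 x hxab
    have hzx := hz0 x hxI
    calc deriv (h ∘ z) x = deriv z x * (1 / q) * (z x + δ) ^ (1 / q - 1) := hchain
      _ ≤ q * g x * (z x + δ) ^ (1 - 1 / q) * (1 / q) * (z x + δ) ^ (1 / q - 1) := by
        gcongr
        refine (hx hxab).trans ?_
        gcongr
        linarith
      _ = g x * (q * (1 / q)) * ((z x + δ) ^ (1 / q - 1) * (z x + δ) ^ (1 - 1 / q)) := by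
        ring
      _ = g x := by rw [hcancel, mul_one_div_cancel hq0.ne', mul_one, mul_one]
  have hmono :=
    intervalIntegral.integral_mono_ae_restrict hab hw.intervalIntegrable_deriv hg hderiv_w
  rw [hw.integral_deriv_eq_sub] at hmono
  simp only [Function.comp_apply, h] at hmono
  linarith

-- `u ↦ u ^ (1 / q)` is not Lipschitz near `0`, hence the detour through `(z + δ) ^ (1 / q)`.
theorem AbsolutelyContinuousOnInterval.rpow_one_div_le_add_integral_of_deriv_le
    (hab : a ≤ b) (hq : 1 ≤ q) (hz : AbsolutelyContinuousOnInterval z a b)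
    (hz0 : ∀ x ∈ Icc a b, 0 ≤ z x) (hg : IntervalIntegrable g volume a b)
    (hg0 : ∀ x ∈ Ioo a b, 0 ≤ g x)
    (hderiv : ∀ᵐ x, x ∈ Ioo a b → deriv z x ≤ q * g x * z x ^ (1 - 1 / q)) :
    z b ^ (1 / q) ≤ z a ^ (1 / q) + ∫ x in a..b, g x := by
  have hcont : ∀ c, Continuous fun δ : ℝ ↦ (c + δ) ^ (1 / q) := fun c ↦
    (continuous_const.add continuous_id).rpow_const fun _ ↦ Or.inr (by positivity)
  refine le_of_tendsto_of_tendsto (f := fun δ ↦ (z b + δ) ^ (1 / q)) (b := 𝓝[>] 0) ?_ ?_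
    (eventually_nhdsWithin_of_forall fun δ hδ ↦
      hz.add_rpow_one_div_le_add_integral_of_deriv_le hab hq hz0 hg hg0 hderiv hδ)
  · simpa using ((hcont (z b)).tendsto 0).mono_left nhdsWithin_le_nhds
  · simpa using (((hcont (z a)).tendsto 0).add_const _).mono_left nhdsWithin_le_nhds

end Bihari

theorem le_rpow_of_le_integral_mul_rpow {q C t : ℝ} {F y : ℝ → ℝ} (ht : 0 ≤ t)
    (hq : 1 ≤ q) (hC : 0 ≤ C) (hF : IntervalIntegrable F volume 0 t)
    (hFy : IntervalIntegrable (fun s ↦ F s * y s ^ (1 - 1 / q)) volume 0 t)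
    (hF0 : ∀ s ∈ Ioc 0 t, 0 ≤ F s) (hy0 : ∀ s ∈ Icc 0 t, 0 ≤ y s)
    (hineq : ∀ s ∈ Icc 0 t, y s ≤ C * q * ∫ u in (0 : ℝ)..s, F u * y u ^ (1 - 1 / q)) :
    y t ≤ (C * ∫ s in (0 : ℝ)..t, F s) ^ q := by
  have hq0 : 0 < q := by linarith
  set Z : ℝ → ℝ := fun s ↦ C * q * ∫ u in (0 : ℝ)..s, F u * y u ^ (1 - 1 / q)
  have hZ : AbsolutelyContinuousOnInterval Z 0 t :=
    (hFy.absolutelyContinuousOnInterval_intervalIntegral left_mem_uIcc).const_mul (C * q)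
  have hZ0 : ∀ s ∈ Icc 0 t, 0 ≤ Z s := fun s hs ↦ by
    refine mul_nonneg (by positivity) ?_
    rw [intervalIntegral.integral_of_le hs.1]
    refine setIntegral_nonneg measurableSet_Ioc fun u hu ↦ ?_
    have hu' : u ∈ Ioc 0 t := ⟨hu.1, hu.2.trans hs.2⟩
    exact mul_nonneg (hF0 u hu') (Real.rpow_nonneg (hy0 u (Ioc_subset_Icc_self hu')) _)
  have hderiv : ∀ᵐ x, x ∈ Ioo 0 t → deriv Z x ≤ q * (C * F x) * Z x ^ (1 - 1 / q) := by
    filter_upwards [hFy.ae_hasDerivAt_integral] with x hx hxt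
    have hxI : x ∈ Icc 0 t := Ioo_subset_Icc_self hxt
    rw [((hx (uIcc_of_le ht ▸ hxI) 0 left_mem_uIcc).const_mul (C * q)).deriv]
    have hFx := hF0 x (Ioo_subset_Ioc_self hxt)
    have hyx := hy0 x hxI
    calc C * q * (F x * y x ^ (1 - 1 / q)) = q * (C * F x) * y x ^ (1 - 1 / q) := by ring
      _ ≤ q * (C * F x) * Z x ^ (1 - 1 / q) := by
        gcongr
        · exact sub_nonneg.2 ((div_le_one hq0).2 hq)
        · exact hineq x hxI
  have hbound := hZ.rpow_one_div_le_add_integral_of_deriv_le ht hq hZ0 (hF.const_mul C)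
    (fun x hx ↦ mul_nonneg hC (hF0 x (Ioo_subset_Ioc_self hx))) hderiv
  have hZt : 0 ≤ Z t := hZ0 t (right_mem_Icc.2 ht)
  rw [show Z 0 = 0 by simp [Z], Real.zero_rpow (one_div_pos.2 hq0).ne', zero_add,
    intervalIntegral.integral_const_mul] at hbound
  calc y t ≤ Z t := hineq t (right_mem_Icc.2 ht)
    _ = (Z t ^ (1 / q)) ^ q := by rw [one_div, Real.rpow_inv_rpow hZt hq0.ne']
    _ ≤ (C * ∫ s in (0 : ℝ)..t, F s) ^ q :=
      Real.rpow_le_rpow (Real.rpow_nonneg hZt _) hbound hq0.le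

theorem stmt3_general (T q C : ℝ) (hq : 1 < q) (hC : 0 < C)
    (F : ℝ → ℝ) (hF : MeasureTheory.IntegrableOn F (Set.Ioc 0 T))
    (hFpos : ∀ s ∈ Set.Ioc (0 : ℝ) T, 0 ≤ F s)
    (y : ℝ → ℝ) (hy : ContinuousOn y (Set.Icc 0 T))
    (hypos : ∀ t ∈ Set.Icc (0 : ℝ) T, 0 ≤ y t)
    (hineq : ∀ t ∈ Set.Icc (0 : ℝ) T,
      y t ≤ C * q * ∫ s in (0 : ℝ)..t, F s * y s ^ (1 - 1 / q)) :
    ∀ t ∈ Set.Icc (0 : ℝ) T, y t ≤ (C * ∫ s in (0 : ℝ)..t, F s) ^ q := by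
  intro t ht
  have hsub : Icc 0 t ⊆ Icc 0 T := Icc_subset_Icc_right ht.2
  have hF' : IntervalIntegrable F volume 0 t :=
    (intervalIntegrable_iff_integrableOn_Ioc_of_le ht.1).2
      (hF.mono_set (Ioc_subset_Ioc_right ht.2))
  have hθ : 0 ≤ 1 - 1 / q := sub_nonneg.2 ((div_le_one (by linarith)).2 hq.le)
  have hFy : IntervalIntegrable (fun s ↦ F s * y s ^ (1 - 1 / q)) volume 0 t :=
    hF'.mul_continuousOn ((hy.mono (uIcc_of_le ht.1 ▸ hsub)).rpow_const fun _ _ ↦ Or.inr hθ)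
  exact le_rpow_of_le_integral_mul_rpow ht.1 hq.le hC.le hF' hFy
    (fun s hs ↦ hFpos s (Ioc_subset_Ioc_right ht.2 hs)) (fun s hs ↦ hypos s (hsub hs))
    (fun s hs ↦ hineq s (hsub hs))

/-- Bihari-type generalization of Grönwall's inequality: if `y` is nonnegative,
continuous, `y 0 = 0` and `y t ≤ C q ∫₀ᵗ F s * y s ^ (1 - 1/q) ds`, then
`y t ≤ (C ∫₀ᵗ F s ds) ^ q`. -/
theorem stmt3 (T q C : ℝ) (hT : 0 < T) (hq : 1 < q) (hC : 0 < C)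
    (F : ℝ → ℝ) (hF : MeasureTheory.IntegrableOn F (Set.Ioc 0 T))
    (hFpos : ∀ s ∈ Set.Ioc (0 : ℝ) T, 0 ≤ F s)
    (y : ℝ → ℝ) (hy : ContinuousOn y (Set.Icc 0 T))
    (hypos : ∀ t ∈ Set.Icc (0 : ℝ) T, 0 ≤ y t) (hy0 : y 0 = 0)
    (hineq : ∀ t ∈ Set.Icc (0 : ℝ) T,
      y t ≤ C * q * ∫ s in (0 : ℝ)..t, F s * y s ^ (1 - 1 / q)) :
    ∀ t ∈ Set.Icc (0 : ℝ) T, y t ≤ (C * ∫ s in (0 : ℝ)..t, F s) ^ q :=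
  stmt3_general T q C hq hC F hF hFpos y hy hypos hineq
end

section
/- There exists a convex function f ∈ C²(ℝ; ℝ) such that (i) x²/2 ≤ f(x) ≤ C(x² + 1) and |f'(x)| ≤ C(1 + |x|) for all x ∈ ℝ and some constant C > 0, but (ii) for every constant C' > 0 and every s ≥ 0 the bound |f''(x)| ≤ C'(1 + |x|^s) fails, i.e. f'' grows faster than any polynomial along some sequence xₖ → ∞. -/
/-!
Take `f' x = x + stair x`, where `stair` is a smooth staircase: it vanishes on `(-∞, 0]`, never
exceeds `|x| + 1`, and climbs from `k` to `k + 1` on `[k, k + exp (-k²)]`. Then `f'` is monotone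
(so `f` is convex) and of linear growth, while the mean value theorem on `[k, k + exp (-k²)]`
produces a point in `(k, k + 1)` where `f'' = 1 + exp (k²)`, which beats every polynomial.
-/

open Real Set

lemma exp_neg_sq_le_one (x : ℝ) : exp (-x ^ 2) ≤ 1 :=
  exp_le_one_iff.2 (neg_nonpos.2 (sq_nonneg x))

noncomputable def stairStep (k : ℕ) (x : ℝ) : ℝ :=
  smoothTransition (exp ((k : ℝ) ^ 2) * (x - k))

noncomputable def stair (x : ℝ) : ℝ := ∑' k : ℕ, stairStep k x

namespace stairStep

lemma eq_zero {k : ℕ} {x : ℝ} (hx : x ≤ k) : stairStep k x = 0 :=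
  smoothTransition.zero_of_nonpos <|
    mul_nonpos_of_nonneg_of_nonpos (exp_pos _).le (sub_nonpos.2 hx)

lemma eq_one {k : ℕ} {x : ℝ} (hx : k + exp (-(k : ℝ) ^ 2) ≤ x) : stairStep k x = 1 := by
  refine smoothTransition.one_of_one_le ?_
  calc (1 : ℝ) = exp ((k : ℝ) ^ 2) * exp (-(k : ℝ) ^ 2) := by
        rw [← exp_add, add_neg_cancel, exp_zero]
    _ ≤ exp ((k : ℝ) ^ 2) * (x - k) := by gcongr; linarith

lemma eq_one_of_succ_le {k : ℕ} {x : ℝ} (hx : (k : ℝ) + 1 ≤ x) : stairStep k x = 1 :=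
  eq_one <| le_trans (by gcongr; exact exp_neg_sq_le_one _) hx

lemma monotone (k : ℕ) : Monotone (stairStep k) := fun _ _ hxy =>
  smoothTransition.monotone <| by gcongr

lemma contDiff (k : ℕ) {n : ℕ∞} : ContDiff ℝ n (stairStep k) :=
  smoothTransition.contDiff.comp (contDiff_const.mul (contDiff_id.sub contDiff_const))

end stairStep

namespace stair

lemma eq_sum {N : ℕ} {x : ℝ} (hx : x < N) : stair x = ∑ k ∈ Finset.range N, stairStep k x :=
  tsum_eq_sum fun k hk => stairStep.eq_zero <|
    hx.le.trans (Nat.cast_le.2 (by simpa using hk))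

lemma eventuallyEq_sum {N : ℕ} {x : ℝ} (hx : x < N) :
    stair =ᶠ[nhds x] fun y => ∑ k ∈ Finset.range N, stairStep k y :=
  Filter.mem_of_superset (Iio_mem_nhds hx) fun _ hy => eq_sum hy

lemma contDiff {n : ℕ∞} : ContDiff ℝ n stair := contDiff_iff_contDiffAt.2 fun x => by
  obtain ⟨N, hN⟩ := exists_nat_gt x
  exact (ContDiff.sum fun k _ => stairStep.contDiff k).contDiffAt.congr_of_eventuallyEq
    (eventuallyEq_sum hN)

lemma continuous : Continuous stair := (contDiff (n := 0)).continuous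

lemma differentiable : Differentiable ℝ stair := (contDiff (n := 1)).differentiable_one

lemma monotone : Monotone stair := fun x y hxy => by
  obtain ⟨N, hN⟩ := exists_nat_gt y
  rw [eq_sum (hxy.trans_lt hN), eq_sum hN]
  exact Finset.sum_le_sum fun k _ => stairStep.monotone k hxy

lemma nonneg (x : ℝ) : 0 ≤ stair x :=
  tsum_nonneg fun _ => smoothTransition.nonneg _

lemma eq_zero {x : ℝ} (hx : x ≤ 0) : stair x = 0 := by
  simp only [stair, stairStep.eq_zero (hx.trans (Nat.cast_nonneg _)), tsum_zero]

lemma le_abs_add_one (x : ℝ) : stair x ≤ |x| + 1 := by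
  rcases le_or_gt x 0 with hx | hx
  · rw [eq_zero hx]; positivity
  calc stair x = ∑ k ∈ Finset.range (⌊x⌋₊ + 1), stairStep k x :=
        eq_sum (by push_cast; exact Nat.lt_floor_add_one x)
    _ ≤ ∑ k ∈ Finset.range (⌊x⌋₊ + 1), (1 : ℝ) :=
        Finset.sum_le_sum fun _ _ => smoothTransition.le_one _
    _ = ⌊x⌋₊ + 1 := by simp
    _ ≤ |x| + 1 := by gcongr; exact (Nat.floor_le hx.le).trans (le_abs_self x)

lemma natCast (k : ℕ) : stair k = k := by
  rw [eq_sum (N := k + 1) (by push_cast; linarith), Finset.sum_range_succ,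
    stairStep.eq_zero le_rfl, add_zero,
    Finset.sum_congr rfl fun j hj => stairStep.eq_one_of_succ_le (x := k) <| by
      exact_mod_cast Finset.mem_range.1 hj]
  simp

lemma natCast_add_exp (k : ℕ) : stair (k + exp (-(k : ℝ) ^ 2)) = k + 1 := by
  have hexp := exp_neg_sq_le_one k
  rw [eq_sum (N := k + 2) (by push_cast; linarith), Finset.sum_range_succ, Finset.sum_range_succ,
    stairStep.eq_zero (k := k + 1) (by push_cast; linarith), stairStep.eq_one le_rfl, add_zero,
    Finset.sum_congr rfl fun j hj => stairStep.eq_one_of_succ_le <| by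
      have : (j : ℝ) + 1 ≤ k := by exact_mod_cast Finset.mem_range.1 hj
      linarith [exp_pos (-(k : ℝ) ^ 2)]]
  simp

lemma exists_deriv_eq (k : ℕ) :
    ∃ c ∈ Ioo (k : ℝ) (k + exp (-(k : ℝ) ^ 2)), deriv stair c = exp ((k : ℝ) ^ 2) := by
  obtain ⟨c, hc, hderiv⟩ := exists_deriv_eq_slope stair (lt_add_of_pos_right _ (exp_pos _))
    continuous.continuousOn differentiable.differentiableOn
  refine ⟨c, hc, ?_⟩
  rw [hderiv, natCast_add_exp, natCast, add_sub_cancel_left, add_sub_cancel_left, exp_neg,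
    one_div, inv_inv]

lemma integral_nonneg (x : ℝ) : 0 ≤ ∫ t in (0 : ℝ)..x, stair t := by
  rcases le_total 0 x with hx | hx
  · exact intervalIntegral.integral_nonneg hx fun t _ => nonneg t
  · rw [intervalIntegral.integral_congr (g := fun _ => (0 : ℝ)) fun t ht =>
      eq_zero (by rw [uIcc_of_ge hx] at ht; exact ht.2)]
    simp

lemma integral_le (x : ℝ) : ∫ t in (0 : ℝ)..x, stair t ≤ (|x| + 1) * |x| := by
  have h := intervalIntegral.norm_integral_le_of_norm_le_const (a := 0) (b := x)
    (C := |x| + 1) (f := stair) fun t ht => by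
      have habs : |t| ≤ |x| := by
        rcases mem_uIoc.1 ht with ⟨h0, hx⟩ | ⟨hx, h0⟩
        · exact abs_le_abs hx (by linarith)
        · exact abs_le_abs_of_nonpos h0 hx.le
      rw [Real.norm_of_nonneg (nonneg t)]
      linarith [le_abs_add_one t]
  rw [Real.norm_eq_abs, sub_zero] at h
  exact (le_abs_self _).trans h

end stair

noncomputable def stairPotential (x : ℝ) : ℝ := x ^ 2 / 2 + ∫ t in (0 : ℝ)..x, stair t

namespace stairPotential

lemma hasDerivAt (x : ℝ) : HasDerivAt stairPotential (x + stair x) x := by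
  have hsq : HasDerivAt (fun y : ℝ => y ^ 2 / 2) x x := by
    simpa using (hasDerivAt_pow 2 x).div_const 2
  exact hsq.add (stair.continuous.integral_hasStrictDerivAt 0 x).hasDerivAt

lemma deriv_eq : deriv stairPotential = fun x => x + stair x :=
  funext fun x => (hasDerivAt x).deriv

lemma differentiable : Differentiable ℝ stairPotential := fun x => (hasDerivAt x).differentiableAt

lemma contDiff : ContDiff ℝ 2 stairPotential := by
  rw [show (2 : WithTop ℕ∞) = 1 + 1 from rfl, contDiff_succ_iff_deriv, deriv_eq]
  exact ⟨differentiable, by simp, contDiff_id.add stair.contDiff⟩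

lemma convexOn : ConvexOn ℝ univ stairPotential := by
  apply Monotone.convexOn_univ_of_deriv differentiable
  rw [deriv_eq]
  exact monotone_id.add stair.monotone

lemma bounds (x : ℝ) :
    x ^ 2 / 2 ≤ stairPotential x ∧ stairPotential x ≤ 2 * (x ^ 2 + 1) ∧
      |deriv stairPotential x| ≤ 2 * (1 + |x|) := by
  refine ⟨le_add_of_nonneg_right (stair.integral_nonneg x), ?_, ?_⟩
  · have := stair.integral_le x
    unfold stairPotential
    nlinarith [sq_abs x, abs_nonneg x]
  · rw [deriv_eq]
    linarith [abs_add_le x (stair x), abs_of_nonneg (stair.nonneg x), stair.le_abs_add_one x]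

lemma exists_deriv_deriv_eq (k : ℕ) :
    ∃ c ∈ Ioo (k : ℝ) (k + exp (-(k : ℝ) ^ 2)),
      deriv (deriv stairPotential) c = 1 + exp ((k : ℝ) ^ 2) := by
  obtain ⟨c, hc, hderiv⟩ := stair.exists_deriv_eq k
  refine ⟨c, hc, ?_⟩
  rw [deriv_eq, ← hderiv]
  exact ((hasDerivAt_id' c).add (stair.differentiable c).hasDerivAt).deriv

end stairPotential

lemma mul_one_add_rpow_lt_exp_sq {C s x y : ℝ} (hC : 0 < C) (hs : 0 ≤ s) (hy : 0 < y)
    (hyx : y ≤ x + 1) (hxs : s + 1 ≤ x) (hxC : log (2 * C) < x) :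
    C * (1 + y ^ s) < exp (x ^ 2) := by
  have hx : 1 ≤ x := by linarith
  have hpow : y ^ s ≤ exp (s * x) := by
    rw [rpow_def_of_pos hy, mul_comm]
    gcongr
    linarith [log_le_sub_one_of_pos hy]
  have hone : 1 ≤ exp (s * x) := one_le_exp (by positivity)
  calc C * (1 + y ^ s) ≤ 2 * C * exp (s * x) := by nlinarith
    _ = exp (log (2 * C) + s * x) := by rw [exp_add, exp_log (by positivity)]
    _ < exp (x ^ 2) := exp_lt_exp.2 (by nlinarith)

/-- There exists a convex `C²` function `f : ℝ → ℝ` with quadratic growth and at most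
linear growth of `f'`, whose second derivative fails every polynomial growth bound. -/
theorem stmt7 : ∃ f : ℝ → ℝ, ContDiff ℝ 2 f ∧ ConvexOn ℝ Set.univ f ∧
    (∃ C : ℝ, 0 < C ∧ ∀ x : ℝ,
      x ^ 2 / 2 ≤ f x ∧ f x ≤ C * (x ^ 2 + 1) ∧ |deriv f x| ≤ C * (1 + |x|)) ∧
    (∀ C' : ℝ, 0 < C' → ∀ s : ℝ, 0 ≤ s →
      ∃ x : ℝ, 0 < x ∧ C' * (1 + x ^ s) < |deriv (deriv f) x|) := by
  refine ⟨stairPotential, stairPotential.contDiff, stairPotential.convexOn,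
    ⟨2, two_pos, stairPotential.bounds⟩, fun C' hC' s hs => ?_⟩
  obtain ⟨k, hk⟩ := exists_nat_gt (max (s + 1) (log (2 * C')))
  obtain ⟨c, ⟨hkc, hck⟩, hc⟩ := stairPotential.exists_deriv_deriv_eq k
  have hc0 : 0 < c := (Nat.cast_nonneg k).trans_lt hkc
  have hexp := exp_neg_sq_le_one k
  refine ⟨c, hc0, ?_⟩
  rw [hc, abs_of_pos (by positivity)]
  linarith [mul_one_add_rpow_lt_exp_sq hC' hs hc0 (by linarith) (le_of_max_le_left hk.le)
    (lt_of_le_of_lt (le_max_right _ _) hk)]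
end

section
/- Let W be convex and C² on ℝ^{d×d}. For any smooth matrix field F : 𝕋^d → ℝ^{d×d} satisfying the curl-free condition ∂_α F_{iβ} = ∂_β F_{iα} for all indices, one has ∫_{𝕋^d} ∂_α S_{iα}(F) ∂_β F_{iβ} dx = ∫_{𝕋^d} (∂²W/∂F_{iβ}∂F_{jγ})(F) ∂_α F_{iβ} ∂_α F_{jγ} dx ≥ 0, where S = DW and repeated indices are summed. -/
open MeasureTheory

section Aux

variable {d : ℕ}

lemma fderiv_of_periodic {X : Type*} [NormedAddCommGroup X] [NormedSpace ℝ X]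
    {f : (Fin d → ℝ) → X} (hf : Differentiable ℝ f) (w : Fin d → ℝ)
    (hp : ∀ x, f (x + w) = f x) (x : Fin d → ℝ) :
    fderiv ℝ f (x + w) = fderiv ℝ f x := by
  have h : HasFDerivAt (fun y : Fin d → ℝ => f (y + w)) (fderiv ℝ f (x + w)) x := by
    simpa [Function.comp_def] using (hf (x + w)).hasFDerivAt.comp x ((hasFDerivAt_id x).add_const w)
  rw [funext hp] at h
  exact h.fderiv.symm

lemma integral_fderiv_periodic_zero (α : Fin d) {g : (Fin d → ℝ) → ℝ}
    (hg : ContDiff ℝ 1 g) (hper : ∀ x, g (x + Pi.single α 1) = g x) :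
    ∫ x in Set.Icc (0 : Fin d → ℝ) 1, fderiv ℝ g x (Pi.single α 1) = 0 := by
  cases d with
  | zero => exact α.elim0
  | succ n =>
    set v : Fin (n + 1) → ℝ := Pi.single α 1 with hv
    set e : ℝ × (Fin n → ℝ) ≃ᵐ (Fin (n + 1) → ℝ) :=
      (MeasurableEquiv.piFinSuccAbove (fun _ => ℝ) α).symm with he
    have hem : MeasurePreserving e :=
      (volume_preserving_piFinSuccAbove (fun _ : Fin (n + 1) => ℝ) α).symm _
    have heI : e ⁻¹' (Set.Icc 0 1) = Set.Icc (0 : ℝ) 1 ×ˢ Set.Icc (0 : Fin n → ℝ) 1 :=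
      ((Fin.insertNthOrderIso (fun _ => ℝ) α).preimage_Icc _ _).trans (Set.Icc_prod_eq _ _)
    have hcont : Continuous fun x : Fin (n + 1) → ℝ => fderiv ℝ g x v :=
      (hg.continuous_fderiv one_ne_zero).clm_apply continuous_const
    have heapp : ∀ z : ℝ × (Fin n → ℝ), e z = α.insertNth z.1 z.2 := by
      intro z
      simp [he, MeasurableEquiv.piFinSuccAbove_symm_apply, Fin.insertNthEquiv,
        Equiv.coe_fn_mk]
    have hins : ∀ (t : ℝ) (y : Fin n → ℝ), α.insertNth t y = α.insertNth 0 y + t • v := by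
      intro t y; funext j
      refine Fin.succAboveCases α ?_ ?_ j
      · simp [hv]
      · intro k
        simp [hv, Pi.single_eq_of_ne (α.succAbove_ne k)]
    have hcins : Continuous fun z : ℝ × (Fin n → ℝ) => (α.insertNth z.1 z.2 : Fin (n + 1) → ℝ) :=
      Continuous.finInsertNth (A := fun _ : Fin (n + 1) => ℝ) α continuous_fst continuous_snd
    have hInt : Integrable (fun z : ℝ × (Fin n → ℝ) => fderiv ℝ g (α.insertNth z.1 z.2) v)
        (((volume : Measure ℝ).restrict (Set.Icc 0 1)).prod
          ((volume : Measure (Fin n → ℝ)).restrict (Set.Icc 0 1))) := by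
      rw [Measure.prod_restrict]
      exact (hcont.comp hcins).continuousOn.integrableOn_compact
        (isCompact_Icc.prod isCompact_Icc)
    have key : ∀ y : Fin n → ℝ,
        ∫ t in Set.Icc (0 : ℝ) 1, fderiv ℝ g (α.insertNth t y) v = 0 := by
      intro y
      set c : Fin (n + 1) → ℝ := α.insertNth 0 y with hc
      have hd : ∀ t : ℝ, HasDerivAt (fun s => g (c + s • v))
          (fderiv ℝ g (c + t • v) v) t := by
        intro t
        have h1 : HasDerivAt (fun s : ℝ => c + s • v) v t := by
          simpa using ((hasDerivAt_id t).smul_const v).const_add c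
        exact (hg.differentiable one_ne_zero _).hasFDerivAt.comp_hasDerivAt t h1
      have hcont2 : Continuous fun t : ℝ => fderiv ℝ g (c + t • v) v :=
        hcont.comp (by fun_prop)
      rw [MeasureTheory.integral_Icc_eq_integral_Ioc,
        ← intervalIntegral.integral_of_le zero_le_one]
      simp_rw [show ∀ t : ℝ, α.insertNth t y = c + t • v from fun t => hins t y]
      rw [intervalIntegral.integral_eq_sub_of_hasDerivAt (fun t _ => hd t)
        ((hcont2).intervalIntegrable 0 1)]
      simp only [one_smul, zero_smul, add_zero]
      rw [hper c]
      simp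
    calc ∫ x in Set.Icc (0 : Fin (n+1) → ℝ) 1, fderiv ℝ g x v
        = ∫ z in Set.Icc (0:ℝ) 1 ×ˢ Set.Icc (0 : Fin n → ℝ) 1, fderiv ℝ g (e z) v := by
          rw [← hem.map_eq, setIntegral_map_equiv, heI]
      _ = ∫ z, fderiv ℝ g (α.insertNth z.1 z.2) v
            ∂(((volume : Measure ℝ).restrict (Set.Icc 0 1)).prod
              ((volume : Measure (Fin n → ℝ)).restrict (Set.Icc 0 1))) := by
          rw [Measure.volume_eq_prod, ← Measure.prod_restrict]
          exact integral_congr_ae (Filter.Eventually.of_forall fun z => by simp only [heapp])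
      _ = ∫ y in Set.Icc (0 : Fin n → ℝ) 1, ∫ t in Set.Icc (0:ℝ) 1,
            fderiv ℝ g (α.insertNth t y) v := integral_prod_symm _ hInt
      _ = 0 := by
          rw [setIntegral_congr_fun measurableSet_Icc fun y _ => key y]
          simp

end Aux

section Aux2

variable {d : ℕ}

lemma ibp (γ : Fin d) {u v : (Fin d → ℝ) → ℝ}
    (hu : ContDiff ℝ 1 u) (hv : ContDiff ℝ 1 v)
    (hpu : ∀ x, u (x + Pi.single γ 1) = u x) (hpv : ∀ x, v (x + Pi.single γ 1) = v x) :
    ∫ x in Set.Icc (0 : Fin d → ℝ) 1, fderiv ℝ u x (Pi.single γ 1) * v x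
      = - ∫ x in Set.Icc (0 : Fin d → ℝ) 1, u x * fderiv ℝ v x (Pi.single γ 1) := by
  have hz := integral_fderiv_periodic_zero γ (hu.mul hv)
    (fun x => by simp only [hpu, hpv])
  have hprod : ∀ x, fderiv ℝ (fun y => u y * v y) x (Pi.single γ 1)
      = fderiv ℝ u x (Pi.single γ 1) * v x + u x * fderiv ℝ v x (Pi.single γ 1) := by
    intro x
    rw [fderiv_fun_mul (hu.differentiable one_ne_zero x) (hv.differentiable one_ne_zero x)]
    simp only [ContinuousLinearMap.add_apply, ContinuousLinearMap.coe_smul',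
      Pi.smul_apply, smul_eq_mul]
    ring
  rw [setIntegral_congr_fun measurableSet_Icc (fun x _ => hprod x)] at hz
  have hcu : Continuous fun x => fderiv ℝ u x (Pi.single γ 1) * v x :=
    ((hu.continuous_fderiv one_ne_zero).clm_apply continuous_const).mul (hv.continuous)
  have hcv : Continuous fun x => u x * fderiv ℝ v x (Pi.single γ 1) :=
    (hu.continuous).mul ((hv.continuous_fderiv one_ne_zero).clm_apply continuous_const)
  rw [integral_add (hcu.integrableOn_Icc) (hcv.integrableOn_Icc)] at hz
  linarith

lemma deriv_nonneg_of_monotone {f : ℝ → ℝ} (hm : Monotone f) {x : ℝ}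
    (hd : DifferentiableAt ℝ f x) : 0 ≤ deriv f x := by
  have ht : Filter.Tendsto (slope f x) (nhdsWithin x (Set.Ioi x)) (nhds (deriv f x)) :=
    (hasDerivAt_iff_tendsto_slope.1 hd.hasDerivAt).mono_left
      (nhdsWithin_mono x fun y hy => ne_of_gt hy)
  refine ge_of_tendsto ht ?_
  filter_upwards [self_mem_nhdsWithin] with y hy
  have hxy : x < y := hy
  have : slope f x y = (f y - f x) / (y - x) := by
    simp [slope_def_field]
  rw [this]
  exact div_nonneg (sub_nonneg.2 (hm hxy.le)) (sub_nonneg.2 hxy.le)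

end Aux2

section Aux3

variable {ι : Type*} [Fintype ι]

lemma second_deriv_nonneg_of_convex {W : EuclideanSpace ℝ ι → ℝ}
    (hW : ContDiff ℝ 2 W) (hconv : ConvexOn ℝ Set.univ W)
    (p q : EuclideanSpace ℝ ι) :
    0 ≤ fderiv ℝ (fderiv ℝ W) p q q := by
  have hWd : Differentiable ℝ W := hW.differentiable two_ne_zero
  have hG : ContDiff ℝ 1 (fderiv ℝ W) := hW.fderiv_right (by norm_num)
  have haff : ∀ t : ℝ, HasDerivAt (fun s : ℝ => p + s • q) q t := fun t => by
    simpa using ((hasDerivAt_id t).smul_const q).const_add p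
  set φ : ℝ → ℝ := fun t => W (p + t • q) with hφ
  have hφ' : ∀ t, HasDerivAt φ (fderiv ℝ W (p + t • q) q) t := fun t =>
    (hWd _).hasFDerivAt.comp_hasDerivAt t (haff t)
  have hd1 : deriv φ = fun t => fderiv ℝ W (p + t • q) q := funext fun t => (hφ' t).deriv
  have hφconv : ConvexOn ℝ Set.univ φ := by
    have h := hconv.comp_affineMap (AffineMap.lineMap p (p + q))
    have : φ = W ∘ (AffineMap.lineMap p (p + q)) := by
      funext t
      simp [hφ, AffineMap.lineMap_apply, add_comm]
    rw [this]
    simpa using h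
  have hmono : Monotone (deriv φ) := by
    have h := hφconv.monotoneOn_deriv (fun t _ => (hφ' t).differentiableAt)
    rw [← monotoneOn_univ]
    exact h
  have h2 : HasDerivAt (deriv φ) (fderiv ℝ (fderiv ℝ W) p q q) 0 := by
    rw [hd1]
    have hq : HasFDerivAt (fun z => fderiv ℝ W z q)
        ((ContinuousLinearMap.apply ℝ ℝ q).comp (fderiv ℝ (fderiv ℝ W) (p + (0:ℝ) • q)))
        (p + (0:ℝ) • q) :=
      (ContinuousLinearMap.apply ℝ ℝ q).hasFDerivAt.comp _
        ((hG.differentiable one_ne_zero) _).hasFDerivAt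
    have := hq.comp_hasDerivAt 0 (haff 0)
    simpa [Function.comp_def] using this
  have h3 := deriv_nonneg_of_monotone hmono h2.differentiableAt
  rwa [h2.deriv] at h3

end Aux3

section Aux4

variable {d : ℕ}

lemma fderiv_fderiv_apply {f : (Fin d → ℝ) → ℝ} (hf : ContDiff ℝ 2 f)
    (x w w' : Fin d → ℝ) :
    fderiv ℝ (fun z => fderiv ℝ f z w) x w' = fderiv ℝ (fderiv ℝ f) x w' w := by
  have hf1 : ContDiff ℝ 1 (fderiv ℝ f) := hf.fderiv_right (by norm_num)
  have h : HasFDerivAt (fun z => fderiv ℝ f z w)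
      ((ContinuousLinearMap.apply ℝ ℝ w).comp (fderiv ℝ (fderiv ℝ f) x)) x :=
    (ContinuousLinearMap.apply ℝ ℝ w).hasFDerivAt.comp x
      ((hf1.differentiable one_ne_zero) x).hasFDerivAt
  rw [h.fderiv]
  rfl

lemma schwarz {f : (Fin d → ℝ) → ℝ} (hf : ContDiff ℝ 2 f) (x w w' : Fin d → ℝ) :
    fderiv ℝ (fun z => fderiv ℝ f z w) x w' = fderiv ℝ (fun z => fderiv ℝ f z w') x w := by
  rw [fderiv_fderiv_apply hf, fderiv_fderiv_apply hf,
    hf.contDiffAt.isSymmSndFDerivAt (by simp) w' w]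

end Aux4

section Aux5

variable {ι : Type*} [Fintype ι] [DecidableEq ι]

lemma gradient_apply_eq {W : EuclideanSpace ℝ ι → ℝ} (p : EuclideanSpace ℝ ι) (k : ι) :
    gradient W p k = fderiv ℝ W p (EuclideanSpace.single k 1) := by
  have h1 : fderiv ℝ W p (EuclideanSpace.single k 1)
      = inner ℝ (gradient W p) (EuclideanSpace.single k (1:ℝ)) := by
    rw [gradient]
    exact (InnerProductSpace.toDual_symm_apply).symm
  rw [h1, EuclideanSpace.inner_single_right]
  simp

lemma clm_sum_expand (M : EuclideanSpace ℝ ι →L[ℝ] ℝ) (q : EuclideanSpace ℝ ι) :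
    ∑ k : ι, M (EuclideanSpace.single k 1) * q k = M q := by
  have hq : q = ∑ k : ι, q k • EuclideanSpace.single k (1:ℝ) := by
    ext j
    simp only [PiLp.smul_apply] at *
    rw [show ((∑ k : ι, q k • EuclideanSpace.single k (1:ℝ)) j)
        = ∑ k : ι, (q k • EuclideanSpace.single k (1:ℝ)) j from by
      rw [WithLp.ofLp_sum, Finset.sum_apply]]
    simp [EuclideanSpace.single_apply, Finset.sum_ite_eq, mul_comm]
  conv_rhs => rw [hq]
  rw [map_sum]
  refine Finset.sum_congr rfl fun k _ => ?_
  rw [_root_.map_smul]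
  simp [mul_comm]

end Aux5

section Aux6

lemma sum3_reorg {n : ℕ} (f : Fin n × Fin n × Fin n → ℝ) :
    ∑ p : Fin n × Fin n × Fin n, f p
      = ∑ β : Fin n, ∑ i : Fin n, ∑ α : Fin n, f (i, α, β) := by
  rw [Fintype.sum_prod_type]
  simp_rw [Fintype.sum_prod_type]
  calc ∑ i : Fin n, ∑ α : Fin n, ∑ β : Fin n, f (i, α, β)
      = ∑ i : Fin n, ∑ β : Fin n, ∑ α : Fin n, f (i, α, β) :=
        Finset.sum_congr rfl fun i _ => Finset.sum_comm
    _ = ∑ β : Fin n, ∑ i : Fin n, ∑ α : Fin n, f (i, α, β) := Finset.sum_comm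

end Aux6

/-- For a convex `C²` stored energy `W` and a smooth periodic curl-free matrix field
`F` on the torus (realized as a ℤᵈ-periodic map on `ℝᵈ` with integrals over `[0,1]ᵈ`),
`∫ ∂_α S_{iα}(F) ∂_β F_{iβ} dx = ∫ D²W(F)(∂_α F, ∂_α F) dx ≥ 0`, where `S = DW`. -/
theorem stmt12 (d : ℕ) (W : EuclideanSpace ℝ (Fin d × Fin d) → ℝ)
    (hW : ContDiff ℝ 2 W) (hconv : ConvexOn ℝ Set.univ W)
    (F : (Fin d → ℝ) → EuclideanSpace ℝ (Fin d × Fin d))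
    (hF : ContDiff ℝ (⊤ : ℕ∞) F)
    (hper : ∀ (x : Fin d → ℝ) (α : Fin d), F (x + Pi.single α 1) = F x)
    (hcurl : ∀ (x : Fin d → ℝ) (i α β : Fin d),
      fderiv ℝ (fun y => F y (i, β)) x (Pi.single α 1) =
        fderiv ℝ (fun y => F y (i, α)) x (Pi.single β 1)) :
    (∫ x in Set.Icc (0 : Fin d → ℝ) 1,
        ∑ i : Fin d,
          (∑ α : Fin d, fderiv ℝ (fun y => gradient W (F y) (i, α)) x (Pi.single α 1)) *
          (∑ β : Fin d, fderiv ℝ (fun y => F y (i, β)) x (Pi.single β 1))) =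
      (∫ x in Set.Icc (0 : Fin d → ℝ) 1,
        ∑ α : Fin d,
          iteratedFDeriv ℝ 2 W (F x)
            ![fderiv ℝ F x (Pi.single α 1), fderiv ℝ F x (Pi.single α 1)]) ∧
    0 ≤ ∫ x in Set.Icc (0 : Fin d → ℝ) 1,
        ∑ α : Fin d,
          iteratedFDeriv ℝ 2 W (F x)
            ![fderiv ℝ F x (Pi.single α 1), fderiv ℝ F x (Pi.single α 1)] := by
  classical
  have hF2 : ContDiff ℝ 2 F := hF.of_le (WithTop.coe_le_coe.2 le_top)
  have hF1 : ContDiff ℝ 1 F := hF.of_le (by simp)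
  have hdF : Differentiable ℝ F := hF1.differentiable one_ne_zero
  have hG : ContDiff ℝ 1 (fderiv ℝ W) := hW.fderiv_right (by norm_num)
  -- coordinate functions of F
  have hPc : ∀ i β : Fin d, ContDiff ℝ 2 (fun y => F y (i, β)) := fun i β =>
    (EuclideanSpace.proj (i, β) : EuclideanSpace ℝ (Fin d × Fin d) →L[ℝ] ℝ).contDiff.comp hF2
  have hdP : ∀ (i β : Fin d) (x w : Fin d → ℝ),
      fderiv ℝ (fun y => F y (i, β)) x w = fderiv ℝ F x w (i, β) := by
    intro i β x w
    have h0 := (EuclideanSpace.proj (i, β) :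
        EuclideanSpace ℝ (Fin d × Fin d) →L[ℝ] ℝ).hasFDerivAt.comp x (hdF x).hasFDerivAt
    have h : HasFDerivAt (fun y => F y (i, β))
        ((EuclideanSpace.proj (i, β)).comp (fderiv ℝ F x)) x := h0
    rw [h.fderiv]; rfl
  have hdPc : ∀ i β γ : Fin d,
      ContDiff ℝ 1 (fun x => fderiv ℝ (fun y => F y (i, β)) x (Pi.single γ 1)) :=
    fun i β γ => ((hPc i β).fderiv_right (by norm_num)).clm_apply contDiff_const
  have hPper : ∀ (i β δ : Fin d) (x : Fin d → ℝ),
      (fun y => F y (i, β)) (x + Pi.single δ 1) = (fun y => F y (i, β)) x := by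
    intro i β δ x; simp only [hper]
  have hdPper : ∀ (i β γ δ : Fin d) (x : Fin d → ℝ),
      fderiv ℝ (fun y => F y (i, β)) (x + Pi.single δ 1) (Pi.single γ 1)
        = fderiv ℝ (fun y => F y (i, β)) x (Pi.single γ 1) := by
    intro i β γ δ x
    rw [fderiv_of_periodic ((hPc i β).differentiable two_ne_zero) _ (hPper i β δ) x]
  -- the stress functions S i α composed with F
  have hgradfun : ∀ i α : Fin d, (fun y => gradient W (F y) (i, α))
      = fun y => fderiv ℝ W (F y) (EuclideanSpace.single (i, α) 1) :=
    fun i α => funext fun y => gradient_apply_eq (F y) (i, α)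
  have hSc : ∀ i α : Fin d,
      ContDiff ℝ 1 (fun y => fderiv ℝ W (F y) (EuclideanSpace.single (i, α) 1)) :=
    fun i α => (hG.comp hF1).clm_apply contDiff_const
  have hSper : ∀ (i α δ : Fin d) (x : Fin d → ℝ),
      (fun y => fderiv ℝ W (F y) (EuclideanSpace.single (i, α) 1)) (x + Pi.single δ 1)
        = (fun y => fderiv ℝ W (F y) (EuclideanSpace.single (i, α) 1)) x := by
    intro i α δ x; simp only [hper]
  have hdS : ∀ (i α : Fin d) (x w : Fin d → ℝ),
      fderiv ℝ (fun y => fderiv ℝ W (F y) (EuclideanSpace.single (i, α) 1)) x w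
        = fderiv ℝ (fderiv ℝ W) (F x) (fderiv ℝ F x w) (EuclideanSpace.single (i, α) 1) := by
    intro i α x w
    have h : HasFDerivAt (fun y => fderiv ℝ W (F y) (EuclideanSpace.single (i, α) 1))
        ((ContinuousLinearMap.apply ℝ ℝ (EuclideanSpace.single (i, α) 1)).comp
          ((fderiv ℝ (fderiv ℝ W) (F x)).comp (fderiv ℝ F x))) x := by
      have h0 := (ContinuousLinearMap.apply ℝ ℝ
          (EuclideanSpace.single (i, α) (1:ℝ))).hasFDerivAt.comp x
        (((hG.differentiable one_ne_zero) (F x)).hasFDerivAt.comp x (hdF x).hasFDerivAt)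
      exact h0
    rw [h.fderiv]; rfl
  -- continuity of the relevant integrands
  have hcdS : ∀ i α γ : Fin d, Continuous fun x =>
      fderiv ℝ (fun y => fderiv ℝ W (F y) (EuclideanSpace.single (i, α) 1)) x
        (Pi.single γ 1) :=
    fun i α γ => ((hSc i α).continuous_fderiv one_ne_zero).clm_apply continuous_const
  have hcdP : ∀ i β γ : Fin d, Continuous fun x =>
      fderiv ℝ (fun y => F y (i, β)) x (Pi.single γ 1) :=
    fun i β γ => (hdPc i β γ).continuous
  -- the double integration by parts for a single index triple
  have key : ∀ i α β : Fin d,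
      (∫ x in Set.Icc (0 : Fin d → ℝ) 1,
        fderiv ℝ (fun y => fderiv ℝ W (F y) (EuclideanSpace.single (i, α) 1)) x
            (Pi.single α 1)
          * fderiv ℝ (fun y => F y (i, β)) x (Pi.single β 1))
      = ∫ x in Set.Icc (0 : Fin d → ℝ) 1,
        fderiv ℝ (fun y => fderiv ℝ W (F y) (EuclideanSpace.single (i, α) 1)) x
            (Pi.single β 1)
          * fderiv ℝ (fun y => F y (i, α)) x (Pi.single β 1) := by
    intro i α β
    rw [ibp α (hSc i α) (hdPc i β β) (hSper i α α) (fun x => hdPper i β β α x)]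
    rw [ibp β (hSc i α) (hdPc i α β) (hSper i α β) (fun x => hdPper i α β β x)]
    congr 1
    refine setIntegral_congr_fun measurableSet_Icc fun x _ => ?_
    congr 1
    rw [schwarz (hPc i β) x (Pi.single β 1) (Pi.single α 1)]
    rw [show (fun z => fderiv ℝ (fun y => F y (i, β)) z (Pi.single α 1))
        = fun z => fderiv ℝ (fun y => F y (i, α)) z (Pi.single β 1) from
      funext fun z => hcurl z i α β]
  -- assemble everything
  have hintT1 : ∀ p : Fin d × Fin d × Fin d,
      IntegrableOn (fun x =>
        fderiv ℝ (fun y => fderiv ℝ W (F y) (EuclideanSpace.single (p.1, p.2.1) 1)) x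
            (Pi.single p.2.1 1)
          * fderiv ℝ (fun y => F y (p.1, p.2.2)) x (Pi.single p.2.2 1))
        (Set.Icc (0 : Fin d → ℝ) 1) volume :=
    fun p => ((hcdS p.1 p.2.1 p.2.1).mul (hcdP p.1 p.2.2 p.2.2)).integrableOn_Icc
  have hintT2 : ∀ p : Fin d × Fin d × Fin d,
      IntegrableOn (fun x =>
        fderiv ℝ (fun y => fderiv ℝ W (F y) (EuclideanSpace.single (p.1, p.2.1) 1)) x
            (Pi.single p.2.2 1)
          * fderiv ℝ (fun y => F y (p.1, p.2.1)) x (Pi.single p.2.2 1))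
        (Set.Icc (0 : Fin d → ℝ) 1) volume :=
    fun p => ((hcdS p.1 p.2.1 p.2.2).mul (hcdP p.1 p.2.1 p.2.2)).integrableOn_Icc
  constructor
  · -- the equality of the two integrals
    calc (∫ x in Set.Icc (0 : Fin d → ℝ) 1,
          ∑ i : Fin d,
            (∑ α : Fin d, fderiv ℝ (fun y => gradient W (F y) (i, α)) x (Pi.single α 1)) *
            (∑ β : Fin d, fderiv ℝ (fun y => F y (i, β)) x (Pi.single β 1)))
        = ∫ x in Set.Icc (0 : Fin d → ℝ) 1, ∑ p : Fin d × Fin d × Fin d,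
            fderiv ℝ (fun y => fderiv ℝ W (F y) (EuclideanSpace.single (p.1, p.2.1) 1)) x
                (Pi.single p.2.1 1)
              * fderiv ℝ (fun y => F y (p.1, p.2.2)) x (Pi.single p.2.2 1) := by
          refine setIntegral_congr_fun measurableSet_Icc fun x _ => ?_
          simp only [hgradfun, Fintype.sum_prod_type]
          exact Finset.sum_congr rfl fun i _ => Finset.sum_mul_sum _ _ _ _
      _ = ∑ p : Fin d × Fin d × Fin d, ∫ x in Set.Icc (0 : Fin d → ℝ) 1,
            fderiv ℝ (fun y => fderiv ℝ W (F y) (EuclideanSpace.single (p.1, p.2.1) 1)) x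
                (Pi.single p.2.1 1)
              * fderiv ℝ (fun y => F y (p.1, p.2.2)) x (Pi.single p.2.2 1) :=
          integral_finset_sum _ fun p _ => hintT1 p
      _ = ∑ p : Fin d × Fin d × Fin d, ∫ x in Set.Icc (0 : Fin d → ℝ) 1,
            fderiv ℝ (fun y => fderiv ℝ W (F y) (EuclideanSpace.single (p.1, p.2.1) 1)) x
                (Pi.single p.2.2 1)
              * fderiv ℝ (fun y => F y (p.1, p.2.1)) x (Pi.single p.2.2 1) :=
          Finset.sum_congr rfl fun p _ => key p.1 p.2.1 p.2.2
      _ = ∫ x in Set.Icc (0 : Fin d → ℝ) 1, ∑ p : Fin d × Fin d × Fin d,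
            fderiv ℝ (fun y => fderiv ℝ W (F y) (EuclideanSpace.single (p.1, p.2.1) 1)) x
                (Pi.single p.2.2 1)
              * fderiv ℝ (fun y => F y (p.1, p.2.1)) x (Pi.single p.2.2 1) :=
          (integral_finset_sum _ fun p _ => hintT2 p).symm
      _ = ∫ x in Set.Icc (0 : Fin d → ℝ) 1,
            ∑ α : Fin d, iteratedFDeriv ℝ 2 W (F x)
              ![fderiv ℝ F x (Pi.single α 1), fderiv ℝ F x (Pi.single α 1)] := by
          refine setIntegral_congr_fun measurableSet_Icc fun x _ => ?_
          rw [sum3_reorg]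
          refine Finset.sum_congr rfl fun β _ => ?_
          rw [iteratedFDeriv_two_apply]
          simp only [Matrix.cons_val_zero, Matrix.cons_val_one, Matrix.head_cons]
          calc (∑ i : Fin d, ∑ α : Fin d,
                fderiv ℝ (fun y => fderiv ℝ W (F y) (EuclideanSpace.single (i, α) 1)) x
                    (Pi.single β 1)
                  * fderiv ℝ (fun y => F y (i, α)) x (Pi.single β 1))
              = ∑ k : Fin d × Fin d,
                  fderiv ℝ (fderiv ℝ W) (F x) (fderiv ℝ F x (Pi.single β 1))
                      (EuclideanSpace.single k 1)
                    * fderiv ℝ F x (Pi.single β 1) k := by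
                rw [Fintype.sum_prod_type]
                exact Finset.sum_congr rfl fun i _ => Finset.sum_congr rfl fun α _ => by
                  rw [hdS, hdP]
            _ = fderiv ℝ (fderiv ℝ W) (F x) (fderiv ℝ F x (Pi.single β 1))
                  (fderiv ℝ F x (Pi.single β 1)) :=
                clm_sum_expand _ _
  · -- nonnegativity
    refine setIntegral_nonneg measurableSet_Icc fun x _ => Finset.sum_nonneg fun α _ => ?_
    rw [iteratedFDeriv_two_apply]
    simp only [Matrix.cons_val_zero, Matrix.cons_val_one, Matrix.head_cons]
    exact second_deriv_nonneg_of_convex hW hconv _ _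
end

section
/- Let σ : ℝ → ℝ be continuous and suppose 0 < a < b satisfy a + σ(t a) = b + σ(t b) for all t ∈ [1,2]. Fix θ ∈ (0,1) and let F : ℝ → ℝ be the 1-periodic function equal to a on (k, k+θ) and b on (k+θ, k+1) for each integer k. Then the pair u(t,x) = t F(x), v(t,x) = ∫₀ˣ F(y) dy is a weak solution of the one-dimensional viscoelasticity system u_t = v_x, v_t = (σ(u) + v_x)_x on (1,2) × ℝ; in particular the flux σ(u) + u_t = σ(t F(x)) + F(x) is independent of x, equal to S(t) := a + σ(ta), for all t ∈ [1,2]. -/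
/-!
Since `F` only takes the values `a` and `b`, the matching condition makes the flux
`σ(t F(x)) + F(x)` equal to `S(t) = a + σ(t a)` for every `x`. The second weak equation thus
reads `∫∫ (v φ_t - S(t) φ_x) = 0`, and each term vanishes after integrating the derivative of the
compactly supported `φ` along the lines on which its coefficient is constant.

For the first one, integrating by parts in `t` turns `∫∫ t F(x) φ_t` into `-∫∫ F φ`, and
integrating by parts in `x` does the same to `∫∫ v φ_x`. The latter is legitimate although `F`
jumps: `v = ∫₀ˣ F` is continuous, and differentiable with `v' = F` off the countable set of
breakpoints `ℤ ∪ (ℤ + θ)`, which the fundamental theorem of calculus tolerates.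
-/

open MeasureTheory Set Filter Function Topology

theorem locallyIntegrable_of_abs_le {X : Type*} [MeasurableSpace X] [TopologicalSpace X]
    {μ : Measure X} [IsLocallyFiniteMeasure μ] {f : X → ℝ} (hf : AEStronglyMeasurable f μ)
    {C : ℝ} (hC : ∀ x, |f x| ≤ C) : LocallyIntegrable f μ :=
  (locallyIntegrable_const C).mono hf (ae_of_all _ fun x => (hC x).trans (le_abs_self C))

theorem MeasureTheory.LocallyIntegrable.continuous_primitive {f : ℝ → ℝ}
    (hf : LocallyIntegrable f) (a : ℝ) : Continuous fun x => ∫ y in a..x, f y :=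
  intervalIntegral.continuous_primitive
    (fun _ _ => (hf.integrableOn_isCompact isCompact_uIcc).intervalIntegrable) a

theorem integral_eq_zero_of_hasDerivAt_off_countable {E : Type*} [NormedAddCommGroup E]
    [NormedSpace ℝ E] [CompleteSpace E] {h h' : ℝ → E} {s : Set ℝ} (hs : s.Countable)
    (hc : Continuous h) (hd : ∀ x ∉ s, HasDerivAt h (h' x) x) (hi : Integrable h')
    (hsupp : HasCompactSupport h) : ∫ x, h' x = 0 := by
  have hftc : ∀ r : ℝ, ∫ x in -r..r, h' x = h r - h (-r) := fun r =>
    integral_eq_of_hasDerivAt_off_countable h h' hs hc.continuousOn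
      (fun x hx => hd x hx.2) (hi.intervalIntegrable)
  have hlim : Tendsto (fun r : ℝ => h r - h (-r)) atTop (𝓝 0) := by
    simpa only [sub_zero, comp_apply] using
      (hsupp.is_zero_at_infty.mono_left atTop_le_cocompact).sub
        (hsupp.is_zero_at_infty.mono_left atBot_le_cocompact |>.comp tendsto_neg_atTop_atBot)
  refine tendsto_nhds_unique ?_ hlim
  simpa only [id, hftc] using
    intervalIntegral_tendsto_integral hi tendsto_neg_atTop_atBot tendsto_id

theorem integral_primitive_mul_deriv {f : ℝ → ℝ} (hf : LocallyIntegrable f) {s : Set ℝ}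
    (hs : s.Countable) (hfc : ∀ x ∉ s, ContinuousAt f x) {g : ℝ → ℝ} (hg : ContDiff ℝ 1 g)
    (hgs : HasCompactSupport g) :
    ∫ x, (∫ y in (0 : ℝ)..x, f y) * deriv g x = -∫ x, f x * g x := by
  set V : ℝ → ℝ := fun x => ∫ y in (0 : ℝ)..x, f y
  have hV : Continuous V := hf.continuous_primitive 0
  have hg' : Continuous (deriv g) := hg.continuous_deriv le_rfl
  have hfg : Integrable fun x => f x * g x :=
    hf.integrable_smul_right_of_hasCompactSupport hg.continuous hgs
  have hVg' : Integrable fun x => V x * deriv g x :=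
    (hV.mul hg').integrable_of_hasCompactSupport hgs.deriv.mul_left
  have hprod : ∀ x ∉ s, HasDerivAt (fun x => V x * g x) (f x * g x + V x * deriv g x) x :=
    fun x hx => (intervalIntegral.integral_hasDerivAt_right
      (hf.integrableOn_isCompact isCompact_uIcc).intervalIntegrable
      hf.aestronglyMeasurable.stronglyMeasurableAtFilter (hfc x hx)).mul
      (hg.differentiable one_ne_zero x).hasDerivAt
  have hzero := integral_eq_zero_of_hasDerivAt_off_countable hs (hV.mul hg.continuous) hprod
    (hfg.add hVg') hgs.mul_left
  rw [integral_add hfg hVg'] at hzero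
  linarith

section Slices

variable {X Y M : Type*} [TopologicalSpace X] [TopologicalSpace Y] [Zero M] {φ : X × Y → M}

theorem HasCompactSupport.comp_prodMk_left [R1Space X] (hφ : HasCompactSupport φ) (y : Y) :
    HasCompactSupport fun x => φ (x, y) :=
  HasCompactSupport.intro (hφ.image continuous_fst) fun _ hx =>
    image_eq_zero_of_notMem_tsupport fun h => hx ⟨_, h, rfl⟩

theorem HasCompactSupport.comp_prodMk_right [R1Space Y] (hφ : HasCompactSupport φ) (x : X) :
    HasCompactSupport fun y => φ (x, y) :=
  HasCompactSupport.intro (hφ.image continuous_snd) fun _ hy =>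
    image_eq_zero_of_notMem_tsupport fun h => hy ⟨_, h, rfl⟩

theorem Continuous.integrable_comp_prodMk_left {ψ : ℝ × ℝ → ℝ} (hψ : Continuous ψ)
    (hψs : HasCompactSupport ψ) (y : ℝ) : Integrable fun x => ψ (x, y) :=
  (hψ.comp (continuous_id.prodMk continuous_const)).integrable_of_hasCompactSupport
    (hψs.comp_prodMk_left y)

theorem Continuous.integrable_comp_prodMk_right {ψ : ℝ × ℝ → ℝ} (hψ : Continuous ψ)
    (hψs : HasCompactSupport ψ) (x : ℝ) : Integrable fun y => ψ (x, y) :=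
  (hψ.comp (continuous_const.prodMk continuous_id)).integrable_of_hasCompactSupport
    (hψs.comp_prodMk_right x)

end Slices

section PartialDerivatives

variable {E : Type*} [NormedAddCommGroup E] [NormedSpace ℝ E] {φ : ℝ × ℝ → E} {t x : ℝ}

theorem DifferentiableAt.hasDerivAt_comp_prodMk_left (hφ : DifferentiableAt ℝ φ (t, x)) :
    HasDerivAt (fun s => φ (s, x)) (fderiv ℝ φ (t, x) (1, 0)) t :=
  hφ.hasFDerivAt.comp_hasDerivAt t ((hasDerivAt_id t).prodMk (hasDerivAt_const t x))

theorem DifferentiableAt.hasDerivAt_comp_prodMk_right (hφ : DifferentiableAt ℝ φ (t, x)) :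
    HasDerivAt (fun y => φ (t, y)) (fderiv ℝ φ (t, x) (0, 1)) x :=
  hφ.hasFDerivAt.comp_hasDerivAt x ((hasDerivAt_const x t).prodMk (hasDerivAt_id x))

end PartialDerivatives

section TestFunction

variable {φ : ℝ × ℝ → ℝ}

theorem fderiv_eq_zero_of_support_subset_prod {s : Set ℝ} (hsupp : support φ ⊆ s ×ˢ univ)
    {p : ℝ × ℝ} (hp : p.1 ∉ closure s) : fderiv ℝ φ p = 0 :=
  fderiv_of_notMem_tsupport ℝ fun h => hp <| by
    simpa only [closure_prod_eq, closure_univ, mem_prod, mem_univ, and_true] using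
      closure_mono hsupp h

theorem integrable_mul_fderiv (hφ : ContDiff ℝ 1 φ) (hφs : HasCompactSupport φ)
    {c : ℝ × ℝ → ℝ} (hc : Continuous c) (v : ℝ × ℝ) :
    Integrable fun p => c p * fderiv ℝ φ p v :=
  (hc.mul ((hφ.continuous_fderiv one_ne_zero).clm_apply continuous_const)
    ).integrable_of_hasCompactSupport (hφs.fderiv_apply ℝ v).mul_left

theorem integrable_comp_snd_mul {f : ℝ → ℝ} (hf : Measurable f) {C : ℝ} (hC : ∀ x, |f x| ≤ C)
    {ψ : ℝ × ℝ → ℝ} (hψ : Continuous ψ) (hψs : HasCompactSupport ψ) :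
    Integrable fun p => f p.2 * ψ p :=
  (locallyIntegrable_of_abs_le (hf.comp measurable_snd).aestronglyMeasurable fun p => hC p.2)
    |>.integrable_smul_right_of_hasCompactSupport hψ hψs

theorem integral_comp_snd_mul_fderiv_fst_eq_zero (hφ : ContDiff ℝ 1 φ)
    (hφs : HasCompactSupport φ) {c : ℝ → ℝ} (hc : Continuous c) :
    ∫ p, c p.2 * fderiv ℝ φ p (1, 0) = 0 := by
  have hD : Continuous fun p => fderiv ℝ φ p (1, 0) :=
    (hφ.continuous_fderiv one_ne_zero).clm_apply continuous_const
  rw [Measure.volume_eq_prod, integral_prod_symm _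
    (integrable_mul_fderiv hφ hφs (c := fun p => c p.2) (hc.comp continuous_snd) _)]
  refine integral_eq_zero_of_ae (ae_of_all _ fun x => ?_)
  dsimp only [Pi.zero_apply]
  rw [integral_const_mul, integral_eq_zero_of_hasDerivAt_of_integrable
    (fun t => (hφ.differentiable one_ne_zero (t, x)).hasDerivAt_comp_prodMk_left)
    (hD.integrable_comp_prodMk_left (hφs.fderiv_apply ℝ _) x)
    (hφ.continuous.integrable_comp_prodMk_left hφs x), mul_zero]

theorem integral_comp_fst_mul_fderiv_snd_eq_zero (hφ : ContDiff ℝ 1 φ)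
    (hφs : HasCompactSupport φ) {c : ℝ → ℝ} (hc : Continuous c) :
    ∫ p, c p.1 * fderiv ℝ φ p (0, 1) = 0 := by
  have hD : Continuous fun p => fderiv ℝ φ p (0, 1) :=
    (hφ.continuous_fderiv one_ne_zero).clm_apply continuous_const
  rw [Measure.volume_eq_prod, integral_prod _
    (integrable_mul_fderiv hφ hφs (c := fun p => c p.1) (hc.comp continuous_fst) _)]
  refine integral_eq_zero_of_ae (ae_of_all _ fun t => ?_)
  dsimp only [Pi.zero_apply]
  rw [integral_const_mul, integral_eq_zero_of_hasDerivAt_of_integrable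
    (fun x => (hφ.differentiable one_ne_zero (t, x)).hasDerivAt_comp_prodMk_right)
    (hD.integrable_comp_prodMk_right (hφs.fderiv_apply ℝ _) t)
    (hφ.continuous.integrable_comp_prodMk_right hφs t), mul_zero]

theorem integral_primitive_comp_snd_mul_fderiv_snd (hφ : ContDiff ℝ 1 φ)
    (hφs : HasCompactSupport φ) {f : ℝ → ℝ} (hf : Measurable f) {C : ℝ} (hC : ∀ x, |f x| ≤ C)
    {s : Set ℝ} (hs : s.Countable) (hfc : ∀ x ∉ s, ContinuousAt f x) :
    ∫ p, (∫ y in (0 : ℝ)..p.2, f y) * fderiv ℝ φ p (0, 1) = -∫ p, f p.2 * φ p := by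
  have hfl : LocallyIntegrable f := locallyIntegrable_of_abs_le hf.aestronglyMeasurable hC
  have hderiv : ∀ t x, deriv (fun y => φ (t, y)) x = fderiv ℝ φ (t, x) (0, 1) := fun t x =>
    (hφ.differentiable one_ne_zero (t, x)).hasDerivAt_comp_prodMk_right.deriv
  have hV : Continuous fun p : ℝ × ℝ => ∫ y in (0 : ℝ)..p.2, f y :=
    (hfl.continuous_primitive 0).comp continuous_snd
  rw [Measure.volume_eq_prod, integral_prod _ (integrable_mul_fderiv hφ hφs hV _),
    integral_prod _ (integrable_comp_snd_mul hf hC hφ.continuous hφs), ← integral_neg]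
  simp only [← hderiv]
  congr 1 with t
  exact integral_primitive_mul_deriv hfl hs hfc (hφ.comp (contDiff_const.prodMk contDiff_id))
    (hφs.comp_prodMk_right t)

theorem integrable_fst_mul_comp_snd_mul_fderiv (hφ : ContDiff ℝ 1 φ)
    (hφs : HasCompactSupport φ) {f : ℝ → ℝ} (hf : Measurable f) {C : ℝ} (hC : ∀ x, |f x| ≤ C)
    (v : ℝ × ℝ) :
    Integrable fun p => p.1 * f p.2 * fderiv ℝ φ p v := by
  refine (integrable_comp_snd_mul hf hC (ψ := fun p => p.1 * fderiv ℝ φ p v)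
    (continuous_fst.mul ((hφ.continuous_fderiv one_ne_zero).clm_apply continuous_const))
    (hφs.fderiv_apply ℝ v).mul_left).congr (ae_of_all _ fun p => ?_)
  ring

theorem integral_fst_mul_comp_snd_mul_fderiv_fst (hφ : ContDiff ℝ 1 φ)
    (hφs : HasCompactSupport φ) {f : ℝ → ℝ} (hf : Measurable f) {C : ℝ}
    (hC : ∀ x, |f x| ≤ C) :
    ∫ p, p.1 * f p.2 * fderiv ℝ φ p (1, 0) = -∫ p, f p.2 * φ p := by
  have hpD : Continuous fun p : ℝ × ℝ => p.1 * fderiv ℝ φ p (1, 0) :=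
    continuous_fst.mul ((hφ.continuous_fderiv one_ne_zero).clm_apply continuous_const)
  have hpDs : HasCompactSupport fun p : ℝ × ℝ => p.1 * fderiv ℝ φ p (1, 0) :=
    (hφs.fderiv_apply ℝ _).mul_left
  have hpφ : Continuous fun p : ℝ × ℝ => p.1 * φ p := continuous_fst.mul hφ.continuous
  have by_parts : ∀ x, ∫ t, t * fderiv ℝ φ (t, x) (1, 0) = -∫ t, φ (t, x) := fun x => by
    simpa only [id, one_mul] using integral_mul_deriv_eq_deriv_mul_of_integrable
      (u := id) (u' := fun _ => 1) (fun t _ => hasDerivAt_id t)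
      (fun t _ => (hφ.differentiable one_ne_zero (t, x)).hasDerivAt_comp_prodMk_left)
      (hpD.integrable_comp_prodMk_left hpDs x)
      (by simpa only [Pi.mul_def, one_mul] using
        hφ.continuous.integrable_comp_prodMk_left hφs x)
      (hpφ.integrable_comp_prodMk_left hφs.mul_left x)
  calc ∫ p, p.1 * f p.2 * fderiv ℝ φ p (1, 0)
      = ∫ x, f x * ∫ t, t * fderiv ℝ φ (t, x) (1, 0) := by
        rw [Measure.volume_eq_prod, integral_prod_symm _
          (integrable_fst_mul_comp_snd_mul_fderiv hφ hφs hf hC _)]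
        simp only [mul_comm _ (f _), mul_assoc, integral_const_mul]
    _ = -∫ p, f p.2 * φ p := by
        rw [Measure.volume_eq_prod, integral_prod_symm _
          (integrable_comp_snd_mul hf hC hφ.continuous hφs), ← integral_neg]
        simp only [by_parts, integral_const_mul, mul_neg]

end TestFunction

theorem continuousAt_of_notMem_breakpoints {F : ℝ → ℝ} {a b θ : ℝ}
    (hFa : ∀ k : ℤ, ∀ x ∈ Ioo (k : ℝ) (k + θ), F x = a)
    (hFb : ∀ k : ℤ, ∀ x ∈ Ioo ((k : ℝ) + θ) (k + 1), F x = b) {x : ℝ}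
    (hx : x ∉ range ((↑) : ℤ → ℝ) ∪ range fun k : ℤ => (k : ℝ) + θ) : ContinuousAt F x := by
  have hconst {l r c : ℝ} (h : ∀ y ∈ Ioo l r, F y = c) (hx : x ∈ Ioo l r) : ContinuousAt F x :=
    continuousAt_const.congr (eventuallyEq_of_mem (Ioo_mem_nhds hx.1 hx.2) h).symm
  simp only [mem_union, mem_range, not_or, not_exists] at hx
  set k := ⌊x⌋
  have hk : (k : ℝ) < x := (Int.floor_le x).lt_of_ne (hx.1 k)
  rcases Ne.lt_or_gt (hx.2 k) with h | h
  · exact hconst (hFb k) ⟨h, Int.lt_floor_add_one x⟩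
  · exact hconst (hFa k) ⟨hk, h⟩

theorem stmt13_general (σ : ℝ → ℝ) (hσ : Continuous σ) (a b θ : ℝ)
    (hmatch : ∀ t ∈ Set.Icc (1 : ℝ) 2, a + σ (t * a) = b + σ (t * b))
    (F : ℝ → ℝ) (hFmeas : Measurable F)
    (hFab : ∀ x : ℝ, F x = a ∨ F x = b)
    (hFa : ∀ k : ℤ, ∀ x ∈ Set.Ioo (k : ℝ) (k + θ), F x = a)
    (hFb : ∀ k : ℤ, ∀ x ∈ Set.Ioo ((k : ℝ) + θ) (k + 1), F x = b) :
    (∀ t ∈ Set.Icc (1 : ℝ) 2, ∀ x : ℝ, σ (t * F x) + F x = a + σ (t * a)) ∧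
    (∀ φ : ℝ × ℝ → ℝ, ContDiff ℝ 1 φ → HasCompactSupport φ →
      Function.support φ ⊆ Set.Ioo (1 : ℝ) 2 ×ˢ (Set.univ : Set ℝ) →
      (∫ p : ℝ × ℝ,
          ((p.1 * F p.2) * fderiv ℝ φ p ((1 : ℝ), (0 : ℝ)) -
            (∫ y in (0 : ℝ)..p.2, F y) * fderiv ℝ φ p ((0 : ℝ), (1 : ℝ)))) = 0 ∧
      (∫ p : ℝ × ℝ,
          ((∫ y in (0 : ℝ)..p.2, F y) * fderiv ℝ φ p ((1 : ℝ), (0 : ℝ)) -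
            (σ (p.1 * F p.2) + F p.2) * fderiv ℝ φ p ((0 : ℝ), (1 : ℝ)))) = 0) := by
  have hFC : ∀ x, |F x| ≤ |a| + |b| := fun x => by
    rcases hFab x with h | h <;> rw [h] <;> linarith [abs_nonneg a, abs_nonneg b]
  have flux : ∀ t ∈ Icc (1 : ℝ) 2, ∀ x, σ (t * F x) + F x = a + σ (t * a) := fun t ht x => by
    rcases hFab x with h | h <;> rw [h] <;> linarith [hmatch t ht]
  have hV : Continuous fun x => ∫ y in (0 : ℝ)..x, F y :=
    (locallyIntegrable_of_abs_le hFmeas.aestronglyMeasurable hFC).continuous_primitive 0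
  have hV₂ : Continuous fun p : ℝ × ℝ => ∫ y in (0 : ℝ)..p.2, F y := hV.comp continuous_snd
  have hS : Continuous fun t => a + σ (t * a) := by fun_prop
  have hS₁ : Continuous fun p : ℝ × ℝ => a + σ (p.1 * a) := hS.comp continuous_fst
  refine ⟨flux, fun φ hφ hφs hsupp => ⟨?_, ?_⟩⟩
  · rw [integral_sub (integrable_fst_mul_comp_snd_mul_fderiv hφ hφs hFmeas hFC _)
      (integrable_mul_fderiv hφ hφs hV₂ _),
      integral_fst_mul_comp_snd_mul_fderiv_fst hφ hφs hFmeas hFC,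
      integral_primitive_comp_snd_mul_fderiv_snd hφ hφs hFmeas hFC
        ((countable_range _).union (countable_range _))
        (fun x => continuousAt_of_notMem_breakpoints hFa hFb), sub_self]
  · have hflux (p : ℝ × ℝ) : (σ (p.1 * F p.2) + F p.2) * fderiv ℝ φ p (0, 1)
        = (a + σ (p.1 * a)) * fderiv ℝ φ p (0, 1) := by
      by_cases hp : p.1 ∈ Icc (1 : ℝ) 2
      · rw [flux p.1 hp]
      · rw [fderiv_eq_zero_of_support_subset_prod hsupp (by rwa [closure_Ioo (by norm_num)]),
          zero_apply, mul_zero, mul_zero]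
    simp only [hflux]
    rw [integral_sub (integrable_mul_fderiv hφ hφs hV₂ _)
      (integrable_mul_fderiv hφ hφs hS₁ _),
      integral_comp_snd_mul_fderiv_fst_eq_zero hφ hφs hV,
      integral_comp_fst_mul_fderiv_snd_eq_zero hφ hφs hS, sub_self]

/-- The oscillatory pair `u(t,x) = t F(x)`, `v(t,x) = ∫₀ˣ F(y) dy`, built from a
periodic two-valued step strain `F` whose values `a, b` satisfy the matching condition
`a + σ(ta) = b + σ(tb)` for `t ∈ [1,2]`, is a weak solution of the 1D viscoelasticity
system `u_t = v_x`, `v_t = (σ(u) + v_x)_x` on `(1,2) × ℝ`; in particular the flux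
`σ(u) + u_t = σ(t F(x)) + F(x)` equals `S(t) = a + σ(ta)`, independent of `x`. -/
theorem stmt13 (σ : ℝ → ℝ) (hσ : Continuous σ) (a b θ : ℝ)
    (ha : 0 < a) (hab : a < b) (hθ : θ ∈ Set.Ioo (0 : ℝ) 1)
    (hmatch : ∀ t ∈ Set.Icc (1 : ℝ) 2, a + σ (t * a) = b + σ (t * b))
    (F : ℝ → ℝ) (hFmeas : Measurable F)
    (hFab : ∀ x : ℝ, F x = a ∨ F x = b)
    (hFa : ∀ k : ℤ, ∀ x ∈ Set.Ioo (k : ℝ) (k + θ), F x = a)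
    (hFb : ∀ k : ℤ, ∀ x ∈ Set.Ioo ((k : ℝ) + θ) (k + 1), F x = b) :
    (∀ t ∈ Set.Icc (1 : ℝ) 2, ∀ x : ℝ, σ (t * F x) + F x = a + σ (t * a)) ∧
    (∀ φ : ℝ × ℝ → ℝ, ContDiff ℝ 1 φ → HasCompactSupport φ →
      Function.support φ ⊆ Set.Ioo (1 : ℝ) 2 ×ˢ (Set.univ : Set ℝ) →
      (∫ p : ℝ × ℝ,
          ((p.1 * F p.2) * fderiv ℝ φ p ((1 : ℝ), (0 : ℝ)) -
            (∫ y in (0 : ℝ)..p.2, F y) * fderiv ℝ φ p ((0 : ℝ), (1 : ℝ)))) = 0 ∧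
      (∫ p : ℝ × ℝ,
          ((∫ y in (0 : ℝ)..p.2, F y) * fderiv ℝ φ p ((1 : ℝ), (0 : ℝ)) -
            (σ (p.1 * F p.2) + F p.2) * fderiv ℝ φ p ((0 : ℝ), (1 : ℝ)))) = 0) :=
  stmt13_general σ hσ a b θ hmatch F hFmeas hFab hFa hFb
end
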